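/- arXiv:1602.02390 — 4 statements merged into one kernel-verified Lean document; each statement's English description precedes it below -/
import Mathlib

section
/- Let X and Y be independent random variables, each uniformly distributed on a 4-element alphabet (equivalently, each consisting of two i.i.d. uniform bits), and let Z = 1 if X = Y and Z = 0 otherwise. Let M be any finite-valued random variable on the same probability space with I(X ; Y | M) = 0, H(Z | (M, X)) = 0 and H(Z | (M, Y)) = 0. Then I(X ; M | Y) + I(Y ; M | X) ≥ (5/2) · log 2. -/
open MeasureTheory ProbabilityTheory Real
open scoped ENNReal

/-- The probability that the random variable `X` takes the value `x`. -/
noncomputable def pm {Ω S : Type*} [MeasurableSpace Ω] (μ : Measure Ω) (X : Ω → S) (x : S) : ℝ :=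
  (μ (X ⁻¹' {x})).toReal

/-- Shannon entropy (with natural logarithm) of a finite-valued random variable. -/
noncomputable def entH {Ω S : Type*} [MeasurableSpace Ω] [Fintype S]
    (μ : Measure Ω) (X : Ω → S) : ℝ :=
  ∑ x : S, Real.negMulLog (pm μ X x)

/-- Conditional entropy `H(X | Y)`. -/
noncomputable def condEnt {Ω S T : Type*} [MeasurableSpace Ω] [Fintype S] [Fintype T]
    (μ : Measure Ω) (X : Ω → S) (Y : Ω → T) : ℝ :=
  entH μ (fun ω => (X ω, Y ω)) - entH μ Y

/-- Mutual information `I(X ; Y)`. -/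
noncomputable def mutInf {Ω S T : Type*} [MeasurableSpace Ω] [Fintype S] [Fintype T]
    (μ : Measure Ω) (X : Ω → S) (Y : Ω → T) : ℝ :=
  entH μ X + entH μ Y - entH μ (fun ω => (X ω, Y ω))

/-- Conditional mutual information `I(X ; Y | Z)`. -/
noncomputable def condMutInf {Ω S T U : Type*} [MeasurableSpace Ω] [Fintype S] [Fintype T]
    [Fintype U] (μ : Measure Ω) (X : Ω → S) (Y : Ω → T) (Z : Ω → U) : ℝ :=
  entH μ (fun ω => (X ω, Z ω)) + entH μ (fun ω => (Y ω, Z ω))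
    - entH μ (fun ω => ((X ω, Y ω), Z ω)) - entH μ Z

/-!
Write `p(m, x, y)` for the joint law of `(M, X, Y)` and `w a ⊗ b` for the product of the marginals
of the slice `p(m, ·, ·)`. Since `I(X ; Y | M) = 0`, every slice equals `w a ⊗ b` (equality case
of Gibbs' inequality). Since `Z` is a function of `(M, X)` and of `(M, Y)`, for each `x` either
`p(m, x, x) = 0` or `p(m, x, x)` carries the whole `x`-row and the whole `x`-column; so either
`a` and `b` have disjoint supports, or both are the point mass at one `x`. In the first case
`H(a) + H(b) ≤ log |supp a| + log |supp b| ≤ 2 log 2`, as the two supports split a 4-letter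
alphabet; in the second case `H(a) + H(b) = 0`. Hence
`2 H(X, Y | M) - H(X | M) - H(Y | M) = E_M [H(a) + H(b)] ≤ 2 log 2 · P(X ≠ Y) = (3/2) log 2`, and
the information cost `2 H(X, Y) - H(X) - H(Y) - (2 H(X, Y | M) - H(X | M) - H(Y | M))` is at least
`4 log 2 - (3/2) log 2`.
-/

namespace EQInformationCost

open Finset InformationTheory

section Entropy

variable {ι : Type*}

lemma sum_negMulLog_le_log_card {s : Finset ι} {p : ι → ℝ} (hp : ∀ i ∈ s, 0 ≤ p i)
    (hsum : ∑ i ∈ s, p i = 1) : ∑ i ∈ s, negMulLog (p i) ≤ log s.card := by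
  have hcard : (0 : ℝ) < s.card := by
    exact_mod_cast (nonempty_of_sum_ne_zero (by rw [hsum]; exact one_ne_zero)).card_pos
  have hjensen := concaveOn_negMulLog.le_map_sum (t := s) (w := fun _ => (s.card : ℝ)⁻¹)
    (fun _ _ => by positivity) (by simp [hcard.ne']) hp
  simp only [smul_eq_mul, ← mul_sum, hsum, mul_one, negMulLog, log_inv] at hjensen
  have := mul_le_mul_of_nonneg_left hjensen hcard.le
  rwa [← mul_assoc, mul_inv_cancel₀ hcard.ne', one_mul, neg_mul_neg, ← mul_assoc,
    mul_inv_cancel₀ hcard.ne', one_mul] at this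

lemma mul_log_div_nonneg {v S : ℝ} (hv : 0 ≤ v) (hvS : v ≤ S) : 0 ≤ v * log (S / v) := by
  rcases hv.eq_or_lt with rfl | hv
  · simp
  exact mul_nonneg hv.le (log_nonneg ((one_le_div hv).2 hvS))

lemma eq_zero_or_eq_of_mul_log_div_eq_zero {v S : ℝ} (hv : 0 ≤ v) (hvS : v ≤ S)
    (h : v * log (S / v) = 0) : v = 0 ∨ v = S := by
  rcases mul_eq_zero.1 h with h | h
  · exact .inl h
  rcases hv.eq_or_lt with rfl | hv
  · exact .inl rfl
  rcases log_eq_zero.1 h with h | h | h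
  · exact absurd ((div_eq_zero_iff.1 h).resolve_right hv.ne') (by linarith)
  · exact .inr ((div_eq_one_iff_eq hv.ne').1 h).symm
  · linarith [div_nonneg (hv.le.trans hvS) hv.le]

lemma sum_negMulLog_sub_negMulLog_sum {s : Finset ι} {v : ι → ℝ} (hv : ∀ i ∈ s, 0 ≤ v i) :
    ∑ i ∈ s, negMulLog (v i) - negMulLog (∑ i ∈ s, v i)
      = ∑ i ∈ s, v i * log ((∑ j ∈ s, v j) / v i) := by
  rw [negMulLog, neg_mul, sum_mul, sub_neg_eq_add, ← sum_add_distrib]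
  refine sum_congr rfl fun i hi => ?_
  rcases (hv i hi).eq_or_lt with h | h
  · simp [← h]
  have hS : 0 < ∑ j ∈ s, v j := h.trans_le (single_le_sum hv hi)
  rw [negMulLog, log_div hS.ne' h.ne']
  ring

lemma negMulLog_sum_le_sum_negMulLog {s : Finset ι} {v : ι → ℝ} (hv : ∀ i ∈ s, 0 ≤ v i) :
    negMulLog (∑ i ∈ s, v i) ≤ ∑ i ∈ s, negMulLog (v i) := by
  rw [← sub_nonneg, sum_negMulLog_sub_negMulLog_sum hv]
  exact sum_nonneg fun i hi => mul_log_div_nonneg (hv i hi) (single_le_sum hv hi)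

lemma eq_zero_or_eq_sum_of_sum_negMulLog_eq {s : Finset ι} {v : ι → ℝ}
    (hv : ∀ i ∈ s, 0 ≤ v i) (h : ∑ i ∈ s, negMulLog (v i) = negMulLog (∑ i ∈ s, v i)) :
    ∀ i ∈ s, v i = 0 ∨ v i = ∑ j ∈ s, v j := by
  rw [← sub_eq_zero, sum_negMulLog_sub_negMulLog_sum hv, sum_eq_zero_iff_of_nonneg
    fun i hi => mul_log_div_nonneg (hv i hi) (single_le_sum hv hi)] at h
  exact fun i hi => eq_zero_or_eq_of_mul_log_div_eq_zero (hv i hi) (single_le_sum hv hi) (h i hi)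

lemma sum_negMulLog_eq_negMulLog_sum_add {s : Finset ι} {v : ι → ℝ} (hv : ∀ i ∈ s, 0 ≤ v i) :
    ∑ i ∈ s, negMulLog (v i)
      = negMulLog (∑ i ∈ s, v i) + (∑ i ∈ s, v i) * ∑ i ∈ s, negMulLog (v i / ∑ j ∈ s, v j) := by
  have hS0 := sum_nonneg hv
  generalize hS : ∑ i ∈ s, v i = S at hS0
  rcases hS0.eq_or_lt with rfl | hS0
  · have hv0 := (sum_eq_zero_iff_of_nonneg hv).1 hS
    simp [sum_eq_zero fun i hi => show negMulLog (v i) = 0 by rw [hv0 i hi, negMulLog_zero]]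
  calc ∑ i ∈ s, negMulLog (v i) = ∑ i ∈ s, negMulLog (S * (v i / S)) := by
        simp only [mul_div_cancel₀ _ hS0.ne']
    _ = negMulLog S + S * ∑ i ∈ s, negMulLog (v i / S) := by
        simp only [negMulLog_mul, sum_add_distrib, ← sum_mul, ← mul_sum, ← sum_div, hS,
          div_self hS0.ne', one_mul]

lemma sum_negMulLog_le_log_card_of_support_subset [Fintype ι] {a : ι → ℝ} {s : Finset ι}
    (ha : ∀ i, 0 ≤ a i) (ha1 : ∑ i, a i = 1) (hs : ∀ i, a i ≠ 0 → i ∈ s) :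
    ∑ i, negMulLog (a i) ≤ log s.card := by
  have hzero : ∀ i ∈ univ, i ∉ s → a i = 0 := fun i _ hi => by_contra fun h => hi (hs i h)
  rw [← sum_subset (subset_univ s) fun i hi his => by rw [hzero i hi his, negMulLog_zero]]
  rw [← sum_subset (subset_univ s) fun i hi his => hzero i hi his] at ha1
  exact sum_negMulLog_le_log_card (fun i _ => ha i) ha1

lemma log_add_log_le_two_mul_log_half {s t n : ℝ} (hs : 0 < s) (ht : 0 < t) (hst : s + t ≤ n) :
    log s + log t ≤ 2 * log (n / 2) := by
  rw [← log_mul hs.ne' ht.ne', show 2 * log (n / 2) = log ((n / 2) ^ 2) by simp [log_pow]]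
  exact log_le_log (mul_pos hs ht) (by nlinarith [sq_nonneg (s - t)])

variable [Fintype ι] {a b : ι → ℝ}

lemma sum_negMulLog_add_sum_negMulLog_le_of_disjoint (ha : ∀ i, 0 ≤ a i) (hb : ∀ i, 0 ≤ b i)
    (ha1 : ∑ i, a i = 1) (hb1 : ∑ i, b i = 1) (hab : ∀ i, a i * b i = 0) :
    ∑ i, negMulLog (a i) + ∑ i, negMulLog (b i) ≤ 2 * log (Fintype.card ι / 2) := by
  classical
  have card_support_pos : ∀ {c : ι → ℝ}, ∑ i, c i = 1 → (0 : ℝ) < #{i | c i ≠ 0} := by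
    intro c hc
    obtain ⟨i, -, hi⟩ := exists_ne_zero_of_sum_ne_zero (hc ▸ one_ne_zero)
    exact_mod_cast card_pos.2 ⟨i, by simpa using hi⟩
  have hdisj : Disjoint (({i | a i ≠ 0} : Finset ι)) ({i | b i ≠ 0} : Finset ι) :=
    disjoint_filter.2 fun i _ hai hbi => (mul_ne_zero hai hbi) (hab i)
  have hcard : ((#{i | a i ≠ 0} : ℕ) : ℝ) + #{i | b i ≠ 0} ≤ Fintype.card ι := by
    exact_mod_cast (card_union_of_disjoint hdisj).symm.trans_le (card_le_univ _)
  calc ∑ i, negMulLog (a i) + ∑ i, negMulLog (b i)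
      ≤ log #{i | a i ≠ 0} + log #{i | b i ≠ 0} :=
        add_le_add (sum_negMulLog_le_log_card_of_support_subset ha ha1 (by simp))
          (sum_negMulLog_le_log_card_of_support_subset hb hb1 (by simp))
    _ ≤ 2 * log (Fintype.card ι / 2) :=
        log_add_log_le_two_mul_log_half (card_support_pos ha1) (card_support_pos hb1) hcard

lemma eq_zero_of_ne_of_eq_one (ha : ∀ i, 0 ≤ a i) (ha1 : ∑ i, a i = 1) {i₀ : ι}
    (hi₀ : a i₀ = 1) {i : ι} (hi : i ≠ i₀) : a i = 0 := by
  classical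
  have hrest : ∑ j ∈ univ.erase i₀, a j = 0 := by
    linarith [add_sum_erase univ a (mem_univ i₀)]
  exact (sum_eq_zero_iff_of_nonneg fun j _ => ha j).1 hrest i (mem_erase.2 ⟨hi, mem_univ i⟩)

lemma sum_negMulLog_add_sum_negMulLog_le (ha : ∀ i, 0 ≤ a i) (hb : ∀ i, 0 ≤ b i)
    (ha1 : ∑ i, a i = 1) (hb1 : ∑ i, b i = 1) (hdet : ∀ i, a i * b i ≠ 0 → a i = 1 ∧ b i = 1) :
    ∑ i, negMulLog (a i) + ∑ i, negMulLog (b i)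
      ≤ 2 * log (Fintype.card ι / 2) * (1 - ∑ i, a i * b i) := by
  by_cases hab : ∀ i, a i * b i = 0
  · simpa [hab] using sum_negMulLog_add_sum_negMulLog_le_of_disjoint ha hb ha1 hb1 hab
  push Not at hab
  obtain ⟨i₀, hi₀⟩ := hab
  obtain ⟨ha₀, hb₀⟩ := hdet i₀ hi₀
  have hent : ∀ {c : ι → ℝ}, (∀ i, 0 ≤ c i) → ∑ i, c i = 1 → c i₀ = 1 →
      ∑ i, negMulLog (c i) = 0 := fun hc hc1 hc₀ => by
    rw [sum_eq_single i₀ (fun i _ hi => by rw [eq_zero_of_ne_of_eq_one hc hc1 hc₀ hi,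
      negMulLog_zero]) (by simp), hc₀, negMulLog_one]
  have hdiag : ∑ i, a i * b i = 1 := by
    rw [sum_eq_single i₀ (fun i _ hi => by rw [eq_zero_of_ne_of_eq_one ha ha1 ha₀ hi, zero_mul])
      (by simp), ha₀, hb₀, one_mul]
  simp [hent ha ha1 ha₀, hent hb hb1 hb₀, hdiag]

end Entropy

lemma mul_klFun_div {q r : ℝ} (hr : r ≠ 0) : r * klFun (q / r) = q * log (q / r) + r - q := by
  rw [klFun_apply]
  field_simp

lemma mul_log_div_sub_add_nonneg {q r : ℝ} (hq : 0 ≤ q) (hr : 0 ≤ r) (hqr : r = 0 → q = 0) :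
    0 ≤ q * log (q / r) - q + r := by
  rcases hr.eq_or_lt with rfl | hr
  · simp [hqr rfl]
  have := mul_nonneg hr.le (klFun_nonneg (div_nonneg hq hr.le))
  rw [mul_klFun_div hr.ne'] at this
  linarith

lemma eq_of_mul_log_div_sub_add_eq_zero {q r : ℝ} (hq : 0 ≤ q) (hr : 0 ≤ r)
    (hqr : r = 0 → q = 0) (h : q * log (q / r) - q + r = 0) : q = r := by
  rcases hr.eq_or_lt with rfl | hr
  · exact hqr rfl
  have hkl : r * klFun (q / r) = 0 := by rw [mul_klFun_div hr.ne']; linarith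
  have := (klFun_eq_zero_iff (div_nonneg hq hr.le)).1 ((mul_eq_zero.1 hkl).resolve_left hr.ne')
  exact (div_eq_one_iff_eq hr.ne').1 this

section Array

variable {α β : Type*} [Fintype α] [Fintype β] (q : α → β → ℝ)

noncomputable def arrayMutInf : ℝ :=
  ∑ x, negMulLog (∑ y, q x y) + ∑ y, negMulLog (∑ x, q x y)
    - ∑ x, ∑ y, negMulLog (q x y) - negMulLog (∑ x, ∑ y, q x y)

noncomputable def marginalProduct (x : α) (y : β) : ℝ :=
  (∑ y', q x y') * (∑ x', q x' y) / ∑ x', ∑ y', q x' y'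

variable {q}

lemma sum_sum_marginalProduct : ∑ x, ∑ y, marginalProduct q x y = ∑ x, ∑ y, q x y := by
  simp only [marginalProduct, ← sum_div, ← mul_sum, ← sum_mul]
  rw [sum_comm (f := fun x y => q x y), mul_self_div_self]

lemma marginalProduct_nonneg (hq : ∀ x y, 0 ≤ q x y) (x : α) (y : β) :
    0 ≤ marginalProduct q x y :=
  div_nonneg (mul_nonneg (sum_nonneg fun y _ => hq x y) (sum_nonneg fun x _ => hq x y))
    (sum_nonneg fun x _ => sum_nonneg fun y _ => hq x y)

lemma eq_zero_of_marginalProduct_eq_zero (hq : ∀ x y, 0 ≤ q x y) {x : α} {y : β}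
    (h : marginalProduct q x y = 0) : q x y = 0 := by
  have hqx : q x y ≤ ∑ y', q x y' := single_le_sum (fun y _ => hq x y) (mem_univ y)
  have hqy : q x y ≤ ∑ x', q x' y := single_le_sum (fun x _ => hq x y) (mem_univ x)
  have hw : ∑ y', q x y' ≤ ∑ x', ∑ y', q x' y' :=
    single_le_sum (f := fun x => ∑ y', q x y') (fun x _ => sum_nonneg fun y _ => hq x y)
      (mem_univ x)
  rcases div_eq_zero_iff.1 h with h | h
  · rcases mul_eq_zero.1 h with h | h <;> linarith [hq x y]
  · linarith [hq x y]

lemma arrayMutInf_eq_sum (hq : ∀ x y, 0 ≤ q x y) :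
    arrayMutInf q = ∑ x, ∑ y,
      (q x y * log (q x y / marginalProduct q x y) - q x y + marginalProduct q x y) := by
  simp only [sum_add_distrib, sum_sub_distrib, sum_sum_marginalProduct, sub_add_cancel]
  have hlog : ∀ x y, q x y * log (q x y / marginalProduct q x y) = q x y * log (q x y)
      - q x y * log (∑ y', q x y') - q x y * log (∑ x', q x' y)
      + q x y * log (∑ x', ∑ y', q x' y') := by
    intro x y
    rcases (hq x y).eq_or_lt with h | h
    · simp [← h]
    have hqx : q x y ≤ ∑ y', q x y' := single_le_sum (fun y _ => hq x y) (mem_univ y)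
    have hqy : q x y ≤ ∑ x', q x' y := single_le_sum (fun x _ => hq x y) (mem_univ x)
    have hw : ∑ y', q x y' ≤ ∑ x', ∑ y', q x' y' :=
      single_le_sum (f := fun x => ∑ y', q x y') (fun x _ => sum_nonneg fun y _ => hq x y)
        (mem_univ x)
    have hxy : 0 < (∑ y', q x y') * ∑ x', q x' y := by nlinarith
    rw [marginalProduct, log_div h.ne' (div_pos hxy (by linarith)).ne',
      log_div hxy.ne' (by linarith), log_mul (by linarith) (by linarith)]
    ring
  simp only [hlog, sum_add_distrib, sum_sub_distrib, arrayMutInf, negMulLog, neg_mul,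
    sum_neg_distrib]
  rw [sum_comm (f := fun x y => q x y * log (∑ x', q x' y))]
  simp only [← sum_mul]
  ring

lemma arrayMutInf_nonneg (hq : ∀ x y, 0 ≤ q x y) : 0 ≤ arrayMutInf q := by
  rw [arrayMutInf_eq_sum hq]
  exact sum_nonneg fun x _ => sum_nonneg fun y _ => mul_log_div_sub_add_nonneg (hq x y)
    (marginalProduct_nonneg hq x y) (eq_zero_of_marginalProduct_eq_zero hq)

lemma eq_marginalProduct_of_arrayMutInf_eq_zero (hq : ∀ x y, 0 ≤ q x y)
    (h : arrayMutInf q = 0) (x : α) (y : β) : q x y = marginalProduct q x y := by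
  have hterm := fun x y => mul_log_div_sub_add_nonneg (hq x y)
    (marginalProduct_nonneg hq x y) (eq_zero_of_marginalProduct_eq_zero hq)
  rw [arrayMutInf_eq_sum hq, sum_eq_zero_iff_of_nonneg fun x _ => sum_nonneg fun y _ =>
    hterm x y] at h
  exact eq_of_mul_log_div_sub_add_eq_zero (hq x y) (marginalProduct_nonneg hq x y)
    (eq_zero_of_marginalProduct_eq_zero hq)
    ((sum_eq_zero_iff_of_nonneg fun y _ => hterm x y).1 (h x (mem_univ x)) y (mem_univ y))

end Array

lemma sum_negMulLog_add_sum_negMulLog_sub_le {ι : Type*} [Fintype ι] {u v d : ι → ℝ} {w : ℝ}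
    (hu : ∀ i, 0 ≤ u i) (hv : ∀ i, 0 ≤ v i) (huw : ∑ i, u i = w) (hvw : ∑ i, v i = w)
    (hd : ∀ i, d i = u i * v i / w) (hdu : ∀ i, d i = 0 ∨ d i = u i)
    (hdv : ∀ i, d i = 0 ∨ d i = v i) :
    ∑ i, negMulLog (u i) + ∑ i, negMulLog (v i) - 2 * negMulLog w
      ≤ 2 * log (Fintype.card ι / 2) * (w - ∑ i, d i) := by
  rcases (huw ▸ sum_nonneg fun i _ => hu i : 0 ≤ w).eq_or_lt with rfl | hw
  · have hu0 := (sum_eq_zero_iff_of_nonneg fun i _ => hu i).1 huw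
    have hv0 := (sum_eq_zero_iff_of_nonneg fun i _ => hv i).1 hvw
    simp [hu0 _ (mem_univ _), hv0 _ (mem_univ _), hd]
  set a : ι → ℝ := fun i => u i / w
  set b : ι → ℝ := fun i => v i / w
  have ha : ∀ i, u i = w * a i := fun i => (mul_div_cancel₀ _ hw.ne').symm
  have hb : ∀ i, v i = w * b i := fun i => (mul_div_cancel₀ _ hw.ne').symm
  have hdab : ∀ i, d i = w * (a i * b i) := fun i => by
    rw [hd, ha, hb]
    field_simp
  have hdet : ∀ i, a i * b i ≠ 0 → a i = 1 ∧ b i = 1 := by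
    intro i hab
    have hdi : d i ≠ 0 := by rw [hdab]; exact mul_ne_zero hw.ne' hab
    have hdu' := (hdu i).resolve_left hdi
    have hdv' := (hdv i).resolve_left hdi
    rw [hdab, ha, mul_right_inj' hw.ne'] at hdu'
    rw [hdab, hb, mul_right_inj' hw.ne'] at hdv'
    exact ⟨(mul_eq_right₀ (right_ne_zero_of_mul hab)).1 hdv',
      (mul_eq_left₀ (left_ne_zero_of_mul hab)).1 hdu'⟩
  have key := sum_negMulLog_add_sum_negMulLog_le (a := a) (b := b)
    (fun i => div_nonneg (hu i) hw.le) (fun i => div_nonneg (hv i) hw.le)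
    (by simp only [a, ← sum_div, huw, div_self hw.ne'])
    (by simp only [b, ← sum_div, hvw, div_self hw.ne']) hdet
  have hU := sum_negMulLog_eq_negMulLog_sum_add (s := univ) fun i _ => hu i
  have hV := sum_negMulLog_eq_negMulLog_sum_add (s := univ) fun i _ => hv i
  rw [huw] at hU
  rw [hvw] at hV
  calc ∑ i, negMulLog (u i) + ∑ i, negMulLog (v i) - 2 * negMulLog w
      = w * (∑ i, negMulLog (a i) + ∑ i, negMulLog (b i)) := by
        rw [hU, hV]; ring
    _ ≤ w * (2 * log (Fintype.card ι / 2) * (1 - ∑ i, a i * b i)) :=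
        mul_le_mul_of_nonneg_left key hw.le
    _ = 2 * log (Fintype.card ι / 2) * (w - ∑ i, d i) := by
        rw [sum_congr rfl fun i _ => hdab i, ← mul_sum]; ring

lemma two_mul_sum_negMulLog_sub_le {ι : Type*} [Fintype ι] {q : ι → ι → ℝ}
    (hq : ∀ x y, 0 ≤ q x y) (hI : arrayMutInf q = 0)
    (hdX : ∀ x, q x x = 0 ∨ q x x = ∑ y, q x y) (hdY : ∀ y, q y y = 0 ∨ q y y = ∑ x, q x y) :
    2 * ∑ x, ∑ y, negMulLog (q x y) - ∑ x, negMulLog (∑ y, q x y) - ∑ y, negMulLog (∑ x, q x y)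
      ≤ 2 * log (Fintype.card ι / 2) * (∑ x, ∑ y, q x y - ∑ x, q x x) := by
  have hent : ∑ x, ∑ y, negMulLog (q x y)
      = ∑ x, negMulLog (∑ y, q x y) + ∑ y, negMulLog (∑ x, q x y)
        - negMulLog (∑ x, ∑ y, q x y) := by
    unfold arrayMutInf at hI; linarith
  have := sum_negMulLog_add_sum_negMulLog_sub_le (fun x => sum_nonneg fun y _ => hq x y)
    (fun y => sum_nonneg fun x _ => hq x y) rfl sum_comm
    (fun x => eq_marginalProduct_of_arrayMutInf_eq_zero hq hI x x) hdX hdY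
  rw [hent]
  linarith

section Pmf

variable {Ω B C : Type*} [MeasurableSpace Ω] (μ : Measure Ω)

lemma pm_congr {W : Ω → B} {W' : Ω → C} {b : B} {c : C} (h : ∀ ω, W ω = b ↔ W' ω = c) :
    pm μ W b = pm μ W' c := by
  unfold pm
  congr 2
  ext ω
  exact h ω

lemma entH_comp_equiv [Fintype B] [Fintype C] (W : Ω → B) (e : B ≃ C) :
    entH μ (fun ω => e (W ω)) = entH μ W := by
  unfold entH
  rw [← e.sum_comp]
  exact sum_congr rfl fun b _ => congr_arg negMulLog (pm_congr μ fun ω => e.apply_eq_iff_eq)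

lemma pm_eq_sum_pm_prod [IsFiniteMeasure μ] [Fintype C] [MeasurableSpace C]
    [MeasurableSingletonClass C] (U : Ω → B) {V : Ω → C} (hV : Measurable V) (u : B) :
    pm μ U u = ∑ v, pm μ (fun ω => (V ω, U ω)) (v, u) := by
  have hfiber : ∀ v, (fun ω => (V ω, U ω)) ⁻¹' {(v, u)} = V ⁻¹' {v} ∩ U ⁻¹' {u} := fun v => by
    ext ω
    simp [Prod.ext_iff]
  unfold pm
  rw [← ENNReal.toReal_sum fun _ _ => measure_ne_top _ _]
  simp only [hfiber, ← Measure.restrict_apply (hV (measurableSet_singleton _))]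
  rw [sum_measure_preimage_singleton _ fun v _ => hV (measurableSet_singleton v)]
  simp

lemma pm_prod_of_indepFun [MeasurableSpace B] [MeasurableSpace C] [MeasurableSingletonClass B]
    [MeasurableSingletonClass C] {X : Ω → B} {Y : Ω → C} (h : IndepFun X Y μ) (x : B) (y : C) :
    pm μ (fun ω => (X ω, Y ω)) (x, y) = pm μ X x * pm μ Y y := by
  unfold pm
  rw [← ENNReal.toReal_mul, ← h.measure_inter_preimage_eq_mul _ _ (measurableSet_singleton x)
    (measurableSet_singleton y)]
  congr 2
  ext ω
  simp [Prod.ext_iff]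

lemma entH_eq_log_card [Fintype B] {W : Ω → B} (h : ∀ b, pm μ W b = (Fintype.card B : ℝ)⁻¹) :
    entH μ W = log (Fintype.card B) := by
  rcases eq_or_ne (Fintype.card B : ℝ) 0 with h0 | h0
  · simp [entH, h, h0]
  simp only [entH, h, sum_const, card_univ, nsmul_eq_mul, negMulLog, log_inv]
  field_simp

lemma pm_eq_zero_or_eq_of_condEnt_eq_zero [IsFiniteMeasure μ] [Fintype B] [MeasurableSpace B]
    [MeasurableSingletonClass B] [Fintype C] {Z : Ω → B} (hZ : Measurable Z) {V : Ω → C}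
    (h : condEnt μ Z V = 0) (z : B) (v : C) :
    pm μ (fun ω => (Z ω, V ω)) (z, v) = 0 ∨ pm μ (fun ω => (Z ω, V ω)) (z, v) = pm μ V v := by
  have hmarg : ∀ v, pm μ V v = ∑ z, pm μ (fun ω => (Z ω, V ω)) (z, v) :=
    pm_eq_sum_pm_prod μ V hZ
  have hnonneg : ∀ v, ∀ z ∈ univ, 0 ≤ pm μ (fun ω => (Z ω, V ω)) (z, v) :=
    fun _ _ _ => ENNReal.toReal_nonneg
  have hgap : ∑ v, (∑ z, negMulLog (pm μ (fun ω => (Z ω, V ω)) (z, v))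
      - negMulLog (∑ z, pm μ (fun ω => (Z ω, V ω)) (z, v))) = 0 := by
    rw [sum_sub_distrib, sum_comm, ← Fintype.sum_prod_type']
    simp only [← hmarg]
    exact h
  rw [sum_eq_zero_iff_of_nonneg fun v _ => sub_nonneg.2
    (negMulLog_sum_le_sum_negMulLog (hnonneg v))] at hgap
  rw [hmarg]
  exact eq_zero_or_eq_sum_of_sum_negMulLog_eq (hnonneg v)
    (sub_eq_zero.1 (hgap v (mem_univ v))) z (mem_univ z)

end Pmf

section JointPmf

variable {Ω T A B : Type*} [MeasurableSpace Ω] (μ : Measure Ω) (M : Ω → T) (X : Ω → A)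
  (Y : Ω → B)

noncomputable def jointPmf (m : T) (x : A) (y : B) : ℝ :=
  pm μ (fun ω => (M ω, X ω, Y ω)) (m, x, y)

lemma jointPmf_nonneg (m : T) (x : A) (y : B) : 0 ≤ jointPmf μ M X Y m x y :=
  ENNReal.toReal_nonneg

lemma jointPmf_swap (m : T) (x : A) (y : B) : jointPmf μ M Y X m y x = jointPmf μ M X Y m x y :=
  pm_congr μ fun ω => by simp only [Prod.mk.injEq]; tauto

lemma entH_jointPmf [Fintype T] [Fintype A] [Fintype B] :
    entH μ (fun ω => (M ω, X ω, Y ω)) = ∑ m, ∑ x, ∑ y, negMulLog (jointPmf μ M X Y m x y) := by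
  simp only [entH, Fintype.sum_prod_type]
  rfl

variable [IsFiniteMeasure μ]

lemma sum_jointPmf_left [Fintype T] [MeasurableSpace T] [MeasurableSingletonClass T]
    {M : Ω → T} (hM : Measurable M) (x : A) (y : B) :
    ∑ m, jointPmf μ M X Y m x y = pm μ (fun ω => (X ω, Y ω)) (x, y) :=
  (pm_eq_sum_pm_prod μ _ hM (x, y)).symm

lemma sum_jointPmf_right [Fintype B] [MeasurableSpace B] [MeasurableSingletonClass B]
    {Y : Ω → B} (hY : Measurable Y) (m : T) (x : A) :
    ∑ y, jointPmf μ M X Y m x y = pm μ (fun ω => (M ω, X ω)) (m, x) := by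
  rw [pm_eq_sum_pm_prod μ _ hY]
  exact sum_congr rfl fun y _ => pm_congr μ fun ω => by simp only [Prod.mk.injEq]; tauto

lemma sum_jointPmf_middle [Fintype A] [MeasurableSpace A] [MeasurableSingletonClass A]
    {X : Ω → A} (hX : Measurable X) (m : T) (y : B) :
    ∑ x, jointPmf μ M X Y m x y = pm μ (fun ω => (M ω, Y ω)) (m, y) := by
  rw [pm_eq_sum_pm_prod μ _ hX]
  exact sum_congr rfl fun x _ => pm_congr μ fun ω => by simp only [Prod.mk.injEq]; tauto

lemma sum_sum_jointPmf [Fintype A] [MeasurableSpace A] [MeasurableSingletonClass A]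
    [Fintype B] [MeasurableSpace B] [MeasurableSingletonClass B] {X : Ω → A} {Y : Ω → B}
    (hX : Measurable X) (hY : Measurable Y) (m : T) :
    ∑ x, ∑ y, jointPmf μ M X Y m x y = pm μ M m := by
  rw [pm_eq_sum_pm_prod μ M hX]
  exact sum_congr rfl fun x _ => (sum_jointPmf_right μ M X hY m x).trans
    (pm_congr μ fun ω => by simp only [Prod.mk.injEq]; tauto)

lemma entH_marginal_right [Fintype T] [Fintype A] [Fintype B] [MeasurableSpace B]
    [MeasurableSingletonClass B] {Y : Ω → B} (hY : Measurable Y) :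
    entH μ (fun ω => (M ω, X ω)) = ∑ m, ∑ x, negMulLog (∑ y, jointPmf μ M X Y m x y) := by
  simp only [entH, Fintype.sum_prod_type, sum_jointPmf_right μ M X hY]

lemma entH_marginal_middle [Fintype T] [Fintype A] [Fintype B] [MeasurableSpace A]
    [MeasurableSingletonClass A] {X : Ω → A} (hX : Measurable X) :
    entH μ (fun ω => (M ω, Y ω)) = ∑ m, ∑ y, negMulLog (∑ x, jointPmf μ M X Y m x y) := by
  simp only [entH, Fintype.sum_prod_type, sum_jointPmf_middle μ M Y hX]

variable [Fintype T] [Fintype A] [Fintype B] [MeasurableSpace A] [MeasurableSingletonClass A]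
  [MeasurableSpace B] [MeasurableSingletonClass B] {X Y}

lemma condMutInf_eq_sum_arrayMutInf (hX : Measurable X) (hY : Measurable Y) :
    condMutInf μ X Y M = ∑ m, arrayMutInf (jointPmf μ M X Y m) := by
  have hXM : entH μ (fun ω => (X ω, M ω)) = entH μ (fun ω => (M ω, X ω)) :=
    entH_comp_equiv μ (fun ω => (M ω, X ω)) (Equiv.prodComm T A)
  have hYM : entH μ (fun ω => (Y ω, M ω)) = entH μ (fun ω => (M ω, Y ω)) :=
    entH_comp_equiv μ (fun ω => (M ω, Y ω)) (Equiv.prodComm T B)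
  have hXYM : entH μ (fun ω => ((X ω, Y ω), M ω)) = entH μ (fun ω => (M ω, X ω, Y ω)) :=
    entH_comp_equiv μ (fun ω => (M ω, X ω, Y ω)) (Equiv.prodComm T (A × B))
  rw [condMutInf, hXM, hYM, hXYM, entH_jointPmf, entH_marginal_right μ M (X := X) hY,
    entH_marginal_middle μ M (Y := Y) hX]
  simp only [entH, ← sum_sum_jointPmf μ M hX hY, arrayMutInf, sum_add_distrib, sum_sub_distrib]

lemma arrayMutInf_jointPmf_eq_zero (hX : Measurable X) (hY : Measurable Y)
    (h : condMutInf μ X Y M = 0) (m : T) : arrayMutInf (jointPmf μ M X Y m) = 0 :=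
  (sum_eq_zero_iff_of_nonneg fun m _ => arrayMutInf_nonneg (jointPmf_nonneg μ M X Y m)).1
    ((condMutInf_eq_sum_arrayMutInf μ M hX hY).symm.trans h) m (mem_univ m)

lemma condMutInf_add_condMutInf (hX : Measurable X) (hY : Measurable Y) :
    condMutInf μ X M Y + condMutInf μ Y M X
      = 2 * entH μ (fun ω => (X ω, Y ω)) - entH μ X - entH μ Y
        - ∑ m, (2 * ∑ x, ∑ y, negMulLog (jointPmf μ M X Y m x y)
          - ∑ x, negMulLog (∑ y, jointPmf μ M X Y m x y)
          - ∑ y, negMulLog (∑ x, jointPmf μ M X Y m x y)) := by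
  have hYX : entH μ (fun ω => (Y ω, X ω)) = entH μ (fun ω => (X ω, Y ω)) :=
    entH_comp_equiv μ (fun ω => (X ω, Y ω)) (Equiv.prodComm A B)
  have hXMY : entH μ (fun ω => ((X ω, M ω), Y ω)) = entH μ (fun ω => (M ω, X ω, Y ω)) :=
    entH_comp_equiv μ (fun ω => (M ω, X ω, Y ω)) ((Equiv.prodAssoc T A B).symm.trans
      ((Equiv.prodComm T A).prodCongr (Equiv.refl B)))
  have hYMX : entH μ (fun ω => ((Y ω, M ω), X ω)) = entH μ (fun ω => (M ω, X ω, Y ω)) :=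
    entH_comp_equiv μ (fun ω => (M ω, X ω, Y ω))
      (((Equiv.refl T).prodCongr (Equiv.prodComm A B)).trans
        ((Equiv.prodAssoc T B A).symm.trans ((Equiv.prodComm T B).prodCongr (Equiv.refl A))))
  rw [condMutInf, condMutInf, hYX, hXMY, hYMX, entH_jointPmf, entH_marginal_right μ M (X := X) hY,
    entH_marginal_middle μ M (Y := Y) hX]
  simp only [sum_sub_distrib, ← mul_sum]
  ring

end JointPmf

lemma jointPmf_diag_eq_zero_or_eq_row_sum {Ω T A S : Type*} [MeasurableSpace Ω] (μ : Measure Ω)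
    [IsFiniteMeasure μ] [Fintype T] [Fintype A] [MeasurableSpace A] [MeasurableSingletonClass A]
    [Fintype S] [MeasurableSpace S] [MeasurableSingletonClass S] (M : Ω → T) (X : Ω → A)
    {Y : Ω → A} (hY : Measurable Y) {Z : Ω → S} (hZ : Measurable Z) {z : S}
    (hZz : ∀ ω, Z ω = z ↔ X ω = Y ω) (h : condEnt μ Z (fun ω => (M ω, X ω)) = 0)
    (m : T) (x : A) :
    jointPmf μ M X Y m x x = 0 ∨ jointPmf μ M X Y m x x = ∑ y, jointPmf μ M X Y m x y := by
  have hdiag : pm μ (fun ω => (Z ω, M ω, X ω)) (z, m, x) = jointPmf μ M X Y m x x :=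
    pm_congr μ fun ω => by simp only [Prod.mk.injEq, hZz]; grind
  rw [← hdiag, sum_jointPmf_right μ M X hY]
  exact pm_eq_zero_or_eq_of_condEnt_eq_zero μ hZ h z (m, x)

lemma jointPmf_diag_eq_zero_or_eq_col_sum {Ω T A S : Type*} [MeasurableSpace Ω]
    (μ : Measure Ω) [IsFiniteMeasure μ] [Fintype T] [Fintype A] [MeasurableSpace A]
    [MeasurableSingletonClass A] [Fintype S] [MeasurableSpace S] [MeasurableSingletonClass S]
    (M : Ω → T) {X : Ω → A} (hX : Measurable X) (Y : Ω → A) {Z : Ω → S} (hZ : Measurable Z)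
    {z : S} (hZz : ∀ ω, Z ω = z ↔ X ω = Y ω) (h : condEnt μ Z (fun ω => (M ω, Y ω)) = 0)
    (m : T) (y : A) :
    jointPmf μ M X Y m y y = 0 ∨ jointPmf μ M X Y m y y = ∑ x, jointPmf μ M X Y m x y := by
  simpa only [jointPmf_swap μ M X Y] using jointPmf_diag_eq_zero_or_eq_row_sum μ M Y hX hZ
    (fun ω => (hZz ω).trans eq_comm) h m y

lemma sum_sub_diag_jointPmf {Ω T A : Type*} [MeasurableSpace Ω] (μ : Measure Ω)
    [IsFiniteMeasure μ] [Fintype T] [MeasurableSpace T] [MeasurableSingletonClass T] [Fintype A]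
    {M : Ω → T} (hM : Measurable M) (X Y : Ω → A) {c : ℝ}
    (h : ∀ x y, pm μ (fun ω => (X ω, Y ω)) (x, y) = c) :
    ∑ m, (∑ x, ∑ y, jointPmf μ M X Y m x y - ∑ x, jointPmf μ M X Y m x x)
      = (Fintype.card A ^ 2 - Fintype.card A) * c := by
  have htotal : ∑ m, ∑ x, ∑ y, jointPmf μ M X Y m x y
      = ∑ x, ∑ y, ∑ m, jointPmf μ M X Y m x y := by
    rw [sum_comm]; exact sum_congr rfl fun x _ => sum_comm
  rw [sum_sub_distrib, htotal, sum_comm (f := fun m x => jointPmf μ M X Y m x x)]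
  simp only [sum_jointPmf_left μ X Y hM, h, sum_const, card_univ, nsmul_eq_mul]
  ring

end EQInformationCost

open EQInformationCost Finset in
/-- 4-ary (two-bit) EQ lower bound: for any finite-valued `M` with `I(X ; Y | M) = 0`,
`H(Z | (M,X)) = 0` and `H(Z | (M,Y)) = 0`, we have
`I(X ; M | Y) + I(Y ; M | X) ≥ (5/2) log 2`. -/
theorem quaternary_EQ_information_cost_lower_bound
    {Ω : Type*} [MeasurableSpace Ω] (μ : Measure Ω) [IsProbabilityMeasure μ]
    {A : Type*} [Fintype A] [DecidableEq A]
    [MeasurableSpace A] [MeasurableSingletonClass A] (hA : Fintype.card A = 4)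
    (X Y : Ω → A) (hX : Measurable X) (hY : Measurable Y)
    (hindep : IndepFun X Y μ)
    (hXunif : ∀ a : A, μ (X ⁻¹' {a}) = (4 : ℝ≥0∞)⁻¹)
    (hYunif : ∀ a : A, μ (Y ⁻¹' {a}) = (4 : ℝ≥0∞)⁻¹)
    (Z : Ω → Fin 2) (hZ : Z = fun ω => if X ω = Y ω then 1 else 0)
    {T : Type*} [Fintype T] [MeasurableSpace T] [MeasurableSingletonClass T]
    (M : Ω → T) (hM : Measurable M)
    (hXY : condMutInf μ X Y M = 0)
    (hZX : condEnt μ Z (fun ω => (M ω, X ω)) = 0)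
    (hZY : condEnt μ Z (fun ω => (M ω, Y ω)) = 0) :
    condMutInf μ X M Y + condMutInf μ Y M X ≥ (5 / 2) * Real.log 2 := by
  have hZ1 : ∀ ω, Z ω = 1 ↔ X ω = Y ω := fun ω => by
    rw [hZ]; by_cases h : X ω = Y ω <;> simp [h]
  have hZm : Measurable Z := hZ ▸ Measurable.ite (measurableSet_eq_fun hX hY) measurable_const
    measurable_const
  have hpX : ∀ a, pm μ X a = (Fintype.card A : ℝ)⁻¹ := fun a => by simp [pm, hXunif, hA]
  have hpY : ∀ a, pm μ Y a = (Fintype.card A : ℝ)⁻¹ := fun a => by simp [pm, hYunif, hA]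
  have hpXY : ∀ x y, pm μ (fun ω => (X ω, Y ω)) (x, y) = (Fintype.card (A × A) : ℝ)⁻¹ :=
    fun x y => by rw [pm_prod_of_indepFun μ hindep, hpX, hpY, Fintype.card_prod]; push_cast; ring
  have hdX := jointPmf_diag_eq_zero_or_eq_row_sum μ M X hY hZm hZ1 hZX
  have hdY := jointPmf_diag_eq_zero_or_eq_col_sum μ M hX Y hZm hZ1 hZY
  have hbound := sum_le_sum fun m (_ : m ∈ univ) => two_mul_sum_negMulLog_sub_le
    (jointPmf_nonneg μ M X Y m) (arrayMutInf_jointPmf_eq_zero μ M hX hY hXY m) (hdX m) (hdY m)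
  rw [← mul_sum, sum_sub_diag_jointPmf μ hM X Y hpXY, Fintype.card_prod, hA] at hbound
  rw [condMutInf_add_condMutInf μ M hX hY, entH_eq_log_card μ (fun _ => hpX _),
    entH_eq_log_card μ (fun _ => hpY _), entH_eq_log_card μ (fun p => hpXY p.1 p.2),
    Fintype.card_prod, hA]
  have hlog4 : log (4 : ℝ) = 2 * log 2 := by
    rw [show (4 : ℝ) = 2 ^ 2 by norm_num, log_pow]; norm_num
  have hlog16 : log (16 : ℝ) = 4 * log 2 := by
    rw [show (16 : ℝ) = 2 ^ 4 by norm_num, log_pow]; norm_num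
  norm_num [hlog4, hlog16] at hbound ⊢
  linarith
end

section
/- Let X and Y be independent random variables, each uniformly distributed on a 4-element alphabet, and let Z = 1 if X = Y and Z = 0 otherwise. Then there exist finite-valued random variables M_1, M_2, M_3, M_4 on a common probability space carrying (X, Y) such that, writing M = (M_1, M_2, M_3, M_4): (i) I(M_1 ; Y | X) = 0, I(M_2 ; X | (Y, M_1)) = 0, I(M_3 ; Y | (X, (M_1, M_2))) = 0 and I(M_4 ; X | (Y, (M_1, M_2, M_3))) = 0 (i.e., M is the transcript of a valid randomized four-message protocol); (ii) H(Z | (M, X)) = 0 and H(Z | (M, Y)) = 0; and (iii) I(X ; M | Y) + I(Y ; M | X) ≤ (11/4) · log 2. -/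
open MeasureTheory ProbabilityTheory Real
open scoped ENNReal

/-- A finite-valued random variable on `Ω`, bundled with its finite alphabet
(whose singletons are measurable). -/
structure FinRV (Ω : Type*) [MeasurableSpace Ω] where
  T : Type
  fin : Fintype T
  meas : MeasurableSpace T
  msc : @MeasurableSingletonClass T meas
  f : Ω → T
  hf : @Measurable Ω T _ meas f

attribute [instance] FinRV.fin FinRV.meas FinRV.msc

/-- A probability space, bundled. -/
structure ProbSpace where
  Ω : Type
  mΩ : MeasurableSpace Ω
  μ : @Measure Ω mΩ
  prob : @IsProbabilityMeasure Ω mΩ μ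

attribute [instance] ProbSpace.mΩ ProbSpace.prob

/-!
The protocol: Alice sends the high bit of `x`. Bob answers `1` if it agrees with the high bit of
`y`, and otherwise a fair private coin, so that Alice cannot tell "high bits differ" from
"continue". After a `1`, Alice sends the low bit of `x`, and Bob, who now knows whether
`x = y`, announces the answer. The information cost is `I(X ; M | Y) = 7/4 · log 2` plus
`I(Y ; M | X) = log 2`.

All entropies are computed on the uniform 32-point space `(x, y, coin)`. There every fiber of
every variable involved has a power-of-two size `32 / 2^b`, so the entropy is `log 2` times the
average of the surprisals `b`, which is a finite computation checked by `decide`. The alphabet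
`A` is then identified with `Fin 4`; relabeling by injections leaves all the quantities unchanged.
-/

section Relabeling

variable {Ω S T U S' T' U' : Type*} [MeasurableSpace Ω] [Fintype S] [Fintype T] [Fintype U]
  [Fintype S'] [Fintype T'] [Fintype U'] (μ : Measure Ω)

theorem measure_preimage_equiv_comp_singleton {α β : Type*} (e : α ≃ β) (V : Ω → α)
    (b : β) :
    μ ((fun ω => e (V ω)) ⁻¹' {b}) = μ (V ⁻¹' {e.symm b}) := by
  congr 1
  ext ω
  simp [e.eq_symm_apply]

theorem entH_comp_injective {f : S → S'} (hf : f.Injective) (X : Ω → S) :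
    entH μ (fun ω => f (X ω)) = entH μ X := by
  classical
  have hfiber (s : S) : (fun ω => f (X ω)) ⁻¹' {f s} = X ⁻¹' {s} := by
    ext ω; simp [hf.eq_iff]
  refine (Fintype.sum_of_injective f hf _ _ (fun s' hs' => ?_) fun s => ?_).symm
  · have : (fun ω => f (X ω)) ⁻¹' {s'} = ∅ :=
      Set.eq_empty_of_forall_notMem fun ω h => hs' ⟨X ω, h⟩
    simp [pm, this]
  · rw [pm, pm, hfiber]

theorem condMutInf_comp_injective {f : S → S'} {g : T → T'} {h : U → U'}
    (hf : f.Injective) (hg : g.Injective) (hh : h.Injective) (X : Ω → S) (Y : Ω → T)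
    (Z : Ω → U) :
    condMutInf μ (fun ω => f (X ω)) (fun ω => g (Y ω)) (fun ω => h (Z ω)) =
      condMutInf μ X Y Z := by
  unfold condMutInf
  rw [← entH_comp_injective μ (hf.prodMap hh) (fun ω => (X ω, Z ω)),
    ← entH_comp_injective μ (hg.prodMap hh) (fun ω => (Y ω, Z ω)),
    ← entH_comp_injective μ ((hf.prodMap hg).prodMap hh) (fun ω => ((X ω, Y ω), Z ω)),
    ← entH_comp_injective μ hh Z]
  rfl

theorem condEnt_comp_self (g : U → S) (Z : Ω → U) : condEnt μ (fun ω => g (Z ω)) Z = 0 := by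
  rw [condEnt, entH_comp_injective μ (f := fun u => (g u, u)) (fun _ _ h => congrArg Prod.snd h),
    sub_self]

theorem condMutInf_comp_self (g : U → S) (Y : Ω → T) (Z : Ω → U) :
    condMutInf μ (fun ω => g (Z ω)) Y Z = 0 := by
  have hYZ : entH μ (fun ω => ((g (Z ω), Y ω), Z ω)) = entH μ (fun ω => (Y ω, Z ω)) :=
    entH_comp_injective μ (f := fun p : T × U => ((g p.2, p.1), p.2))
      (fun _ _ h => by simp only [Prod.mk.injEq] at h; exact Prod.ext h.1.2 h.2)
      (fun ω => (Y ω, Z ω))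
  rw [condMutInf, hYZ, entH_comp_injective μ (f := fun u => (g u, u))
    (fun _ _ h => congrArg Prod.snd h)]
  ring

end Relabeling

abbrev FinRV.ofDiscrete {Ω T : Type} [MeasurableSpace Ω] [DiscreteMeasurableSpace Ω]
    [Fintype T] [MeasurableSpace T] [MeasurableSingletonClass T] (f : Ω → T) : FinRV Ω :=
  ⟨T, inferInstance, inferInstance, inferInstance, f, .of_discrete⟩

section Uniform

open Finset

variable {α β Ω S : Type*} [Fintype α] [Fintype β] [Fintype Ω]
  [MeasurableSpace α] [MeasurableSpace β] [MeasurableSpace Ω] [MeasurableSingletonClass Ω]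

theorem uniformOn_univ_prod :
    (uniformOn .univ : Measure α).prod (uniformOn .univ : Measure β) = uniformOn .univ := by
  refine Measure.prod_eq fun s t hs ht => ?_
  simp only [uniformOn_univ, Measure.count_apply (hs.prod ht), Measure.count_apply hs,
    Measure.count_apply ht, Set.encard_prod, Fintype.card_prod, Nat.cast_mul, ENat.toENNReal_mul]
  exact ENNReal.mul_div_mul_comm (by simp) (by simp)

def fiberCard [DecidableEq S] (W : Ω → S) (ω : Ω) : ℕ := #{ω' | W ω' = W ω}

theorem pm_uniformOn_univ [DecidableEq S] (W : Ω → S) (s : S) :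
    pm (uniformOn .univ) W s = #{ω | W ω = s} / Fintype.card Ω := by
  have : W ⁻¹' {s} = ↑({ω | W ω = s} : Finset Ω) := by ext; simp
  rw [pm, uniformOn_univ, this, Measure.count_apply_finset, ENNReal.toReal_div]
  simp

theorem entH_uniformOn_univ [Fintype S] [DecidableEq S] (W : Ω → S) :
    entH (uniformOn .univ) W =
      (∑ ω, Real.log (Fintype.card Ω / fiberCard W ω)) / Fintype.card Ω := by
  have hfiber (s : S) : negMulLog (#{ω | W ω = s} / Fintype.card Ω) =
      #{ω | W ω = s} * Real.log (Fintype.card Ω / #{ω | W ω = s}) / Fintype.card Ω := by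
    rw [negMulLog, ← neg_neg (Real.log _), ← Real.log_inv, inv_div]; ring
  simp only [entH, pm_uniformOn_univ, hfiber, ← Finset.sum_div]
  congr 1
  simp only [fiberCard]
  rw [← Finset.sum_fiberwise' univ W (fun s => Real.log (Fintype.card Ω / #{ω | W ω = s}))]
  simp

theorem entH_uniformOn_univ_of_fiberCard_mul_two_pow [Fintype S] [DecidableEq S] (W : Ω → S)
    (b : Ω → ℕ) (hb : ∀ ω, fiberCard W ω * 2 ^ b ω = Fintype.card Ω) :
    entH (uniformOn .univ) W = (∑ ω, b ω : ℕ) / Fintype.card Ω * Real.log 2 := by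
  have hlog (ω : Ω) : Real.log (Fintype.card Ω / fiberCard W ω) = b ω * Real.log 2 := by
    have hpos : (0 : ℝ) < fiberCard W ω := by
      exact_mod_cast Finset.card_pos.2 ⟨ω, by simp⟩
    rw [← hb ω, Nat.cast_mul, mul_div_cancel_left₀ _ hpos.ne', Nat.cast_pow, Nat.cast_ofNat,
      Real.log_pow]
  rw [entH_uniformOn_univ]
  simp only [hlog, ← Finset.sum_mul, Nat.cast_sum]
  ring

end Uniform

namespace QuaternaryEQ

/-- Alice's input, Bob's input, Bob's private coin. -/
abbrev Sample : Type := Fin 4 × Fin 4 × Fin 2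

noncomputable abbrev μ : Measure Sample := uniformOn .univ

def X (ω : Sample) : Fin 4 := ω.1
def Y (ω : Sample) : Fin 4 := ω.2.1
def coin (ω : Sample) : Fin 2 := ω.2.2

def hi : Fin 4 → Fin 2 := ![0, 0, 1, 1]
def lo : Fin 4 → Fin 2 := ![0, 1, 0, 1]

def m1 (ω : Sample) : Fin 2 := hi (X ω)
def m2 (ω : Sample) : Fin 2 := if hi (Y ω) = m1 ω then 1 else coin ω
def m3 (ω : Sample) : Fin 2 := if m2 ω = 1 then lo (X ω) else 0
def m4 (ω : Sample) : Fin 2 := if hi (Y ω) = m1 ω ∧ lo (Y ω) = m3 ω then 1 else 0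

def transcript (ω : Sample) : Fin 2 × Fin 2 × Fin 2 × Fin 2 := (m1 ω, m2 ω, m3 ω, m4 ω)

theorem m4_eq_ite (ω : Sample) : m4 ω = if X ω = Y ω then 1 else 0 := by
  revert ω; decide

theorem indepFun_X_Y : IndepFun X Y μ := by
  have := indepFun_prod (μ := uniformOn (.univ : Set (Fin 4)))
    (ν := uniformOn (.univ : Set (Fin 4 × Fin 2))) measurable_id measurable_fst
  rwa [uniformOn_univ_prod] at this

theorem measure_X_preimage (b : Fin 4) : μ (X ⁻¹' {b}) = 4⁻¹ := by
  rw [show X ⁻¹' {b} = {b} ×ˢ .univ by ext; simp [X], μ, ← uniformOn_univ_prod,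
    Measure.prod_prod, measure_univ, mul_one, uniformOn_univ]
  simp

theorem measure_Y_preimage (b : Fin 4) : μ (Y ⁻¹' {b}) = 4⁻¹ := by
  rw [show Y ⁻¹' {b} = .univ ×ˢ ({b} ×ˢ .univ) by ext; simp [Y], μ, ← uniformOn_univ_prod,
    Measure.prod_prod, measure_univ, one_mul, ← uniformOn_univ_prod, Measure.prod_prod,
    measure_univ, mul_one, uniformOn_univ]
  simp

/-- `Nat.log 2 (32 / fiberCard W ω)` is the surprisal of `W ω` in bits. -/
theorem entH_eq_of_surprisal_sum {S : Type*} [Fintype S] [DecidableEq S] (W : Sample → S)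
    (n : ℕ) (hW : ∀ ω, fiberCard W ω * 2 ^ Nat.log 2 (32 / fiberCard W ω) = 32)
    (hn : ∑ ω, Nat.log 2 (32 / fiberCard W ω) = n) :
    entH μ W = n / 32 * Real.log 2 := by
  rw [entH_uniformOn_univ_of_fiberCard_mul_two_pow W _ hW, hn]
  rfl

theorem condMutInf_m1_Y_X : condMutInf μ m1 Y X = 0 :=
  condMutInf_comp_self μ hi Y X

theorem condMutInf_m2_X_Y_m1 : condMutInf μ m2 X (fun ω => (Y ω, m1 ω)) = 0 := by
  rw [condMutInf,
    entH_eq_of_surprisal_sum (fun ω => (m2 ω, Y ω, m1 ω)) 112 (by decide) (by decide),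
    entH_eq_of_surprisal_sum (fun ω => (X ω, Y ω, m1 ω)) 128 (by decide) (by decide),
    entH_eq_of_surprisal_sum (fun ω => ((m2 ω, X ω), Y ω, m1 ω)) 144 (by decide) (by decide),
    entH_eq_of_surprisal_sum (fun ω => (Y ω, m1 ω)) 96 (by decide) (by decide)]
  ring

theorem condMutInf_m3_Y_X_m1_m2 : condMutInf μ m3 Y (fun ω => (X ω, m1 ω, m2 ω)) = 0 :=
  condMutInf_comp_self μ (fun p : Fin 4 × Fin 2 × Fin 2 => if p.2.2 = 1 then lo p.1 else 0) Y
    (fun ω => (X ω, m1 ω, m2 ω))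

theorem condMutInf_m4_X_Y_m1_m2_m3 :
    condMutInf μ m4 X (fun ω => (Y ω, m1 ω, m2 ω, m3 ω)) = 0 :=
  condMutInf_comp_self μ (fun p : Fin 4 × Fin 2 × Fin 2 × Fin 2 =>
    if hi p.1 = p.2.1 ∧ lo p.1 = p.2.2.2 then 1 else 0) X (fun ω => (Y ω, m1 ω, m2 ω, m3 ω))

theorem condMutInf_X_transcript_Y : condMutInf μ X transcript Y = 7 / 4 * Real.log 2 := by
  rw [condMutInf,
    entH_eq_of_surprisal_sum (fun ω => (X ω, Y ω)) 128 (by decide) (by decide),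
    entH_eq_of_surprisal_sum (fun ω => (transcript ω, Y ω)) 136 (by decide) (by decide),
    entH_eq_of_surprisal_sum (fun ω => ((X ω, transcript ω), Y ω)) 144 (by decide) (by decide),
    entH_eq_of_surprisal_sum Y 64 (by decide) (by decide)]
  ring

theorem condMutInf_Y_transcript_X : condMutInf μ Y transcript X = Real.log 2 := by
  rw [condMutInf,
    entH_eq_of_surprisal_sum (fun ω => (Y ω, X ω)) 128 (by decide) (by decide),
    entH_eq_of_surprisal_sum (fun ω => (transcript ω, X ω)) 112 (by decide) (by decide),
    entH_eq_of_surprisal_sum (fun ω => ((Y ω, transcript ω), X ω)) 144 (by decide) (by decide),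
    entH_eq_of_surprisal_sum X 64 (by decide) (by decide)]
  ring

end QuaternaryEQ

theorem quaternary_EQ_randomized_protocol_upper_bound_general
    (A : Type) [Fintype A] [DecidableEq A]
    [MeasurableSpace A] (hA : Fintype.card A = 4) :
    ∃ (P : ProbSpace) (X Y : P.Ω → A) (M1 M2 M3 M4 : FinRV P.Ω),
      Measurable X ∧ Measurable Y ∧
      IndepFun X Y P.μ ∧
      (∀ a : A, P.μ (X ⁻¹' {a}) = (4 : ℝ≥0∞)⁻¹) ∧
      (∀ a : A, P.μ (Y ⁻¹' {a}) = (4 : ℝ≥0∞)⁻¹) ∧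
      -- (i) the Markov conditions of a valid interactive protocol
      condMutInf P.μ M1.f Y X = 0 ∧
      condMutInf P.μ M2.f X (fun ω => (Y ω, M1.f ω)) = 0 ∧
      condMutInf P.μ M3.f Y (fun ω => (X ω, (M1.f ω, M2.f ω))) = 0 ∧
      condMutInf P.μ M4.f X (fun ω => (Y ω, (M1.f ω, M2.f ω, M3.f ω))) = 0 ∧
      -- (ii) both parties can compute Z from their input and the transcript
      condEnt P.μ (fun ω => if X ω = Y ω then (1 : Fin 2) else 0)
        (fun ω => ((M1.f ω, M2.f ω, M3.f ω, M4.f ω), X ω)) = 0 ∧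
      condEnt P.μ (fun ω => if X ω = Y ω then (1 : Fin 2) else 0)
        (fun ω => ((M1.f ω, M2.f ω, M3.f ω, M4.f ω), Y ω)) = 0 ∧
      -- (iii) information cost at most (11/4) log 2
      condMutInf P.μ X (fun ω => (M1.f ω, M2.f ω, M3.f ω, M4.f ω)) Y
        + condMutInf P.μ Y (fun ω => (M1.f ω, M2.f ω, M3.f ω, M4.f ω)) X
        ≤ (11 / 4) * Real.log 2 := open QuaternaryEQ Function in by
  obtain ⟨e⟩ : Nonempty (Fin 4 ≃ A) := ⟨(Fintype.equivFinOfCardEq hA).symm⟩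
  have he := e.injective
  have hZ : (fun ω => if e (X ω) = e (Y ω) then (1 : Fin 2) else 0) = m4 :=
    funext fun ω => by simp [he.eq_iff, m4_eq_ite]
  refine ⟨⟨Sample, _, μ, inferInstance⟩, fun ω => e (X ω), fun ω => e (Y ω),
    .ofDiscrete m1, .ofDiscrete m2, .ofDiscrete m3, .ofDiscrete m4, .of_discrete, .of_discrete,
    indepFun_X_Y.comp .of_discrete .of_discrete,
    fun a => (measure_preimage_equiv_comp_singleton μ e X a).trans (measure_X_preimage _),
    fun a => (measure_preimage_equiv_comp_singleton μ e Y a).trans (measure_Y_preimage _),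
    ?_, ?_, ?_, ?_, ?_, ?_, ?_⟩
  · exact (condMutInf_comp_injective μ injective_id he he m1 Y X :).trans condMutInf_m1_Y_X
  · exact (condMutInf_comp_injective μ injective_id he (he.prodMap injective_id) m2 X
      (fun ω => (Y ω, m1 ω)) :).trans condMutInf_m2_X_Y_m1
  · exact (condMutInf_comp_injective μ injective_id he (he.prodMap injective_id) m3 Y
      (fun ω => (X ω, m1 ω, m2 ω)) :).trans condMutInf_m3_Y_X_m1_m2
  · exact (condMutInf_comp_injective μ injective_id he (he.prodMap injective_id) m4 X
      (fun ω => (Y ω, m1 ω, m2 ω, m3 ω)) :).trans condMutInf_m4_X_Y_m1_m2_m3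
  · rw [hZ]
    exact condEnt_comp_self μ (fun p => p.1.2.2.2) (fun ω => (transcript ω, e (X ω)))
  · rw [hZ]
    exact condEnt_comp_self μ (fun p => p.1.2.2.2) (fun ω => (transcript ω, e (Y ω)))
  · have hXY := (condMutInf_comp_injective μ he injective_id he X transcript Y :).trans
      condMutInf_X_transcript_Y
    have hYX := (condMutInf_comp_injective μ he injective_id he Y transcript X :).trans
      condMutInf_Y_transcript_X
    exact le_of_eq ((congrArg₂ (· + ·) hXY hYX).trans (by ring))

/-- Randomized protocol for two-bit (4-ary) EQ: there is a probability space carrying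
independent uniform `X, Y` on the 4-element alphabet `A` together with a valid four-message
transcript `M = (M₁, M₂, M₃, M₄)` that computes `Z = 1_{X=Y}` at both terminals and whose
information cost satisfies `I(X ; M | Y) + I(Y ; M | X) ≤ (11/4) log 2`. -/
theorem quaternary_EQ_randomized_protocol_upper_bound
    (A : Type) [Fintype A] [DecidableEq A]
    [MeasurableSpace A] [MeasurableSingletonClass A] (hA : Fintype.card A = 4) :
    ∃ (P : ProbSpace) (X Y : P.Ω → A) (M1 M2 M3 M4 : FinRV P.Ω),
      Measurable X ∧ Measurable Y ∧
      IndepFun X Y P.μ ∧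
      (∀ a : A, P.μ (X ⁻¹' {a}) = (4 : ℝ≥0∞)⁻¹) ∧
      (∀ a : A, P.μ (Y ⁻¹' {a}) = (4 : ℝ≥0∞)⁻¹) ∧
      -- (i) the Markov conditions of a valid interactive protocol
      condMutInf P.μ M1.f Y X = 0 ∧
      condMutInf P.μ M2.f X (fun ω => (Y ω, M1.f ω)) = 0 ∧
      condMutInf P.μ M3.f Y (fun ω => (X ω, (M1.f ω, M2.f ω))) = 0 ∧
      condMutInf P.μ M4.f X (fun ω => (Y ω, (M1.f ω, M2.f ω, M3.f ω))) = 0 ∧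
      -- (ii) both parties can compute Z from their input and the transcript
      condEnt P.μ (fun ω => if X ω = Y ω then (1 : Fin 2) else 0)
        (fun ω => ((M1.f ω, M2.f ω, M3.f ω, M4.f ω), X ω)) = 0 ∧
      condEnt P.μ (fun ω => if X ω = Y ω then (1 : Fin 2) else 0)
        (fun ω => ((M1.f ω, M2.f ω, M3.f ω, M4.f ω), Y ω)) = 0 ∧
      -- (iii) information cost at most (11/4) log 2
      condMutInf P.μ X (fun ω => (M1.f ω, M2.f ω, M3.f ω, M4.f ω)) Y
        + condMutInf P.μ Y (fun ω => (M1.f ω, M2.f ω, M3.f ω, M4.f ω)) X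
        ≤ (11 / 4) * Real.log 2 :=
  quaternary_EQ_randomized_protocol_upper_bound_general A hA
end

section
/- Let k ≥ 2 be an even integer. Let X and Y be independent random variables, each uniformly distributed on a k-element alphabet, let Z = 1 if X = Y and Z = 0 otherwise, and set U = (X, Z), V = (Y, Z). Then for every finite-valued random variable Q on the same probability space with I(U ; V | Q) = 0, it holds that H(U | Q) + H(V | Q) ≤ 2 · (1 − 1/k) · log(k/2). -/
open MeasureTheory ProbabilityTheory Real
open scoped ENNReal

/-!
Conditioning on `Q = t` writes `H(U|Q) + H(V|Q)` and `I(U;V|Q)` as averages over `t` of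
`H(U) + H(V)` and `I(U;V)` under `μ[|Q ← t]`. Mutual information is the Kullback–Leibler
divergence of the joint law from the product of the marginals, hence nonnegative and zero only
under independence; so every conditional `I(U;V)` vanishes and `U`, `V` are conditionally
independent. Since `Z` is a function
of `U` and of `V`, independence forces the support of `(X, Y)` to be a rectangle `S_X × S_Y` on
which `Z` is constant: either a single diagonal point, where `H(U) = H(V) = 0`, or an off-diagonal
rectangle with `S_X`, `S_Y` disjoint, where `H(U) + H(V) ≤ log |S_X| + log |S_Y| ≤ 2 log (k/2)`.
So `H(U) + H(V) ≤ (1 - P(Z = 1)) · 2 log (k/2)` under each `μ[|Q ← t]`, and averaging over `t`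
gives the bound, because `P(X = Y) = 1/k`.
-/

open Finset InformationTheory

lemma mul_klFun_div_mul {p a b : ℝ} (hp : 0 ≤ p) (ha : p ≤ a) (hb : p ≤ b) :
    a * b * klFun (p / (a * b)) = p * log p - p * log a - p * log b + (a * b - p) := by
  rcases hp.eq_or_lt with rfl | hp
  · simp [klFun_zero]
  have ha : 0 < a := hp.trans_le ha
  have hb : 0 < b := hp.trans_le hb
  rw [klFun, log_div hp.ne' (mul_pos ha hb).ne', log_mul ha.ne' hb.ne']
  field_simp
  ring

lemma log_add_log_le_two_mul_log_half {m n k : ℝ} (hm : 0 < m) (hn : 0 < n) (h : m + n ≤ k) :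
    log m + log n ≤ 2 * log (k / 2) := by
  rw [← log_mul hm.ne' hn.ne', ← log_rpow (by linarith), rpow_two]
  exact log_le_log (by positivity) (by nlinarith [sq_nonneg (m - n)])

section Entropy

variable {Ω S T T' : Type*} [MeasurableSpace Ω] {μ : Measure Ω}

lemma pm_nonneg (X : Ω → S) (x : S) : 0 ≤ pm μ X x := ENNReal.toReal_nonneg

lemma pm_mono [IsFiniteMeasure μ] {X : Ω → S} {Y : Ω → T} {x : S} {y : T}
    (h : ∀ ω, X ω = x → Y ω = y) : pm μ X x ≤ pm μ Y y :=
  ENNReal.toReal_mono (measure_ne_top _ _) (measure_mono fun ω hω => h ω hω)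

lemma exists_eq_of_pm_pos {X : Ω → S} {x : S} (h : 0 < pm μ X x) : ∃ ω, X ω = x :=
  nonempty_of_measure_ne_zero fun h0 : μ (X ⁻¹' {x}) = 0 => by simp [pm, h0] at h

lemma pm_pair_le_pm_fst [IsFiniteMeasure μ] (X : Ω → S) (Y : Ω → T) (x : S) (y : T) :
    pm μ (fun ω => (X ω, Y ω)) (x, y) ≤ pm μ X x :=
  pm_mono fun _ h => congrArg Prod.fst h

lemma pm_pair_le_pm_snd [IsFiniteMeasure μ] (X : Ω → S) (Y : Ω → T) (x : S) (y : T) :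
    pm μ (fun ω => (X ω, Y ω)) (x, y) ≤ pm μ Y y :=
  pm_mono fun _ h => congrArg Prod.snd h

lemma pm_pair_eq_mul_of_indepFun [MeasurableSpace S] [MeasurableSingletonClass S]
    [MeasurableSpace T] [MeasurableSingletonClass T] {X : Ω → S} {Y : Ω → T}
    (h : IndepFun X Y μ) (x : S) (y : T) :
    pm μ (fun ω => (X ω, Y ω)) (x, y) = pm μ X x * pm μ Y y := by
  have hpre : (fun ω => (X ω, Y ω)) ⁻¹' {(x, y)} = X ⁻¹' {x} ∩ Y ⁻¹' {y} := by ext; simp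
  rw [pm, hpre, h.measure_inter_preimage_eq_mul _ _ (measurableSet_singleton x)
    (measurableSet_singleton y), ENNReal.toReal_mul, pm, pm]

lemma isProbabilityMeasure_cond_of_pm_ne_zero [IsFiniteMeasure μ] {Q : Ω → T} {t : T}
    (ht : pm μ Q t ≠ 0) : IsProbabilityMeasure μ[|Q ← t] :=
  cond_isProbabilityMeasure fun h => ht (by simp [pm, h])

lemma pm_cond_mul_pm [IsFiniteMeasure μ] [MeasurableSpace T] [MeasurableSingletonClass T]
    {Q : Ω → T} (hQ : Measurable Q) (X : Ω → S) (x : S) (t : T) :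
    pm μ[|Q ← t] X x * pm μ Q t = pm μ (fun ω => (X ω, Q ω)) (x, t) := by
  have hpre : (fun ω => (X ω, Q ω)) ⁻¹' {(x, t)} = Q ⁻¹' {t} ∩ X ⁻¹' {x} := by
    ext ω; simp [and_comm]
  rw [pm, pm, pm, ← ENNReal.toReal_mul, cond_mul_eq_inter (hQ (measurableSet_singleton t)), hpre]

variable [Fintype S]

lemma sum_mul_log_pm_eq_neg_entH (X : Ω → S) : ∑ x, pm μ X x * log (pm μ X x) = -entH μ X := by
  simp [entH, negMulLog]

variable [MeasurableSpace S] [MeasurableSingletonClass S]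

lemma pm_comp [IsFiniteMeasure μ] [DecidableEq T] {W : Ω → S} (hW : Measurable W) (g : S → T)
    (y : T) : pm μ (fun ω => g (W ω)) y = ∑ x with g x = y, pm μ W x := by
  have hpre : (fun ω => g (W ω)) ⁻¹' {y} = W ⁻¹' ↑({x | g x = y} : Finset S) := by
    ext ω; simp
  rw [pm, hpre, ← sum_measure_preimage_singleton _ fun x _ => hW (measurableSet_singleton x),
    ENNReal.toReal_sum fun _ _ => measure_ne_top _ _]
  rfl

lemma exists_pm_pos_of_pm_comp_pos [IsFiniteMeasure μ] {W : Ω → S} (hW : Measurable W)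
    {g : S → T} {y : T} (h : 0 < pm μ (fun ω => g (W ω)) y) : ∃ x, 0 < pm μ W x ∧ g x = y := by
  classical
  rw [pm_comp hW, ← sum_const_zero] at h
  obtain ⟨x, hx, hpos⟩ := exists_lt_of_sum_lt h
  exact ⟨x, hpos, (mem_filter.1 hx).2⟩

lemma pm_comp_eq_zero [IsFiniteMeasure μ] {W : Ω → S} (hW : Measurable W) {g : S → T} {y : T}
    (h : ∀ x, 0 < pm μ W x → g x ≠ y) : pm μ (fun ω => g (W ω)) y = 0 :=
  le_antisymm (not_lt.1 fun hpos =>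
    let ⟨x, hx, hgx⟩ := exists_pm_pos_of_pm_comp_pos hW hpos
    h x hx hgx) (pm_nonneg _ _)

variable (μ) in
lemma sum_pm [IsProbabilityMeasure μ] {X : Ω → S} (hX : Measurable X) : ∑ x, pm μ X x = 1 := by
  simp only [pm]
  rw [← ENNReal.toReal_sum fun _ _ => measure_ne_top _ _,
    sum_measure_preimage_singleton _ fun x _ => hX (measurableSet_singleton x)]
  simp

variable (μ) in
lemma exists_pm_pos [IsProbabilityMeasure μ] {X : Ω → S} (hX : Measurable X) :
    ∃ x, 0 < pm μ X x := by
  have h : ∑ _x : S, (0 : ℝ) < ∑ x, pm μ X x := by simp [sum_pm μ hX]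
  obtain ⟨x, _, hx⟩ := exists_lt_of_sum_lt h
  exact ⟨x, hx⟩

lemma entH_le_log_card [IsProbabilityMeasure μ] {X : Ω → S} (hX : Measurable X) {s : Finset S}
    (hs : ∀ x, 0 < pm μ X x → x ∈ s) : entH μ X ≤ log #s := by
  have hzero : ∀ x ∉ s, pm μ X x = 0 := fun x hx =>
    le_antisymm (not_lt.1 fun h => hx (hs x h)) (pm_nonneg X x)
  have hmass : ∑ x ∈ s, pm μ X x = 1 := by
    rw [← sum_pm μ hX, sum_subset (subset_univ s) fun x _ hx => hzero x hx]
  have hn : (0 : ℝ) < #s := by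
    obtain ⟨x, hx⟩ := exists_pm_pos μ hX
    exact_mod_cast card_pos.2 ⟨x, hs x hx⟩
  have hjensen := concaveOn_negMulLog.le_map_sum (t := s) (w := fun _ => (#s : ℝ)⁻¹)
    (p := pm μ X) (fun _ _ => by positivity) (by simp [hn.ne']) fun x _ => pm_nonneg X x
  simp only [smul_eq_mul, ← mul_sum, hmass, mul_one] at hjensen
  calc entH μ X = ∑ x ∈ s, negMulLog (pm μ X x) := by
        rw [entH, ← sum_subset (subset_univ s) fun x _ hx => by simp [hzero x hx]]
    _ = #s * ((#s : ℝ)⁻¹ * ∑ x ∈ s, negMulLog (pm μ X x)) := by field_simp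
    _ ≤ #s * negMulLog (#s : ℝ)⁻¹ := by gcongr
    _ = log #s := by simp [negMulLog, log_inv]; field_simp

variable [Fintype T] [MeasurableSpace T] [MeasurableSingletonClass T]
  [Fintype T'] [MeasurableSpace T'] [MeasurableSingletonClass T']

lemma entH_comp_le_log_card [IsProbabilityMeasure μ] {W : Ω → S} (hW : Measurable W) {g : S → T}
    {s : Finset T} (hs : ∀ x, 0 < pm μ W x → g x ∈ s) : entH μ (fun ω => g (W ω)) ≤ log #s :=
  entH_le_log_card (Measurable.of_discrete.comp hW) fun _ hy =>
    let ⟨x, hx, hgx⟩ := exists_pm_pos_of_pm_comp_pos hW hy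
    hgx ▸ hs x hx

lemma pm_eq_sum_pm_pair_left [IsFiniteMeasure μ] {X : Ω → S} {Y : Ω → T} (hX : Measurable X)
    (hY : Measurable Y) (x : S) : pm μ X x = ∑ y, pm μ (fun ω => (X ω, Y ω)) (x, y) := by
  classical
  rw [show pm μ X x = pm μ (fun ω => (Prod.fst (X ω, Y ω))) x from rfl, pm_comp (hX.prodMk hY),
    sum_filter, Fintype.sum_prod_type, sum_comm]
  simp

lemma pm_eq_sum_pm_pair_right [IsFiniteMeasure μ] {X : Ω → S} {Y : Ω → T} (hX : Measurable X)
    (hY : Measurable Y) (y : T) : pm μ Y y = ∑ x, pm μ (fun ω => (X ω, Y ω)) (x, y) := by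
  classical
  rw [show pm μ Y y = pm μ (fun ω => (Prod.snd (X ω, Y ω))) y from rfl, pm_comp (hX.prodMk hY),
    sum_filter, Fintype.sum_prod_type]
  simp

lemma sum_pm_pair_mul_fst [IsFiniteMeasure μ] {X : Ω → S} {Y : Ω → T} (hX : Measurable X)
    (hY : Measurable Y) (f : S → ℝ) :
    ∑ xy, pm μ (fun ω => (X ω, Y ω)) xy * f xy.1 = ∑ x, pm μ X x * f x := by
  simp_rw [Fintype.sum_prod_type, ← sum_mul, ← pm_eq_sum_pm_pair_left hX hY]

lemma sum_pm_pair_mul_snd [IsFiniteMeasure μ] {X : Ω → S} {Y : Ω → T} (hX : Measurable X)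
    (hY : Measurable Y) (f : T → ℝ) :
    ∑ xy, pm μ (fun ω => (X ω, Y ω)) xy * f xy.2 = ∑ y, pm μ Y y * f y := by
  simp_rw [Fintype.sum_prod_type_right, ← sum_mul, ← pm_eq_sum_pm_pair_right hX hY]

lemma mutInf_eq_sum_klFun [IsProbabilityMeasure μ] {X : Ω → S} {Y : Ω → T} (hX : Measurable X)
    (hY : Measurable Y) :
    mutInf μ X Y = ∑ xy : S × T, pm μ X xy.1 * pm μ Y xy.2
      * klFun (pm μ (fun ω => (X ω, Y ω)) xy / (pm μ X xy.1 * pm μ Y xy.2)) := by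
  have hprod : ∑ xy : S × T, pm μ X xy.1 * pm μ Y xy.2 = 1 := by
    rw [Fintype.sum_prod_type, ← sum_mul_sum, sum_pm μ hX, sum_pm μ hY, one_mul]
  simp_rw [mul_klFun_div_mul (pm_nonneg _ _) (pm_pair_le_pm_fst X Y _ _)
    (pm_pair_le_pm_snd X Y _ _), Prod.mk.eta]
  rw [sum_add_distrib, sum_sub_distrib, sum_sub_distrib, sum_sub_distrib, hprod,
    sum_pm μ (hX.prodMk hY), sum_pm_pair_mul_fst hX hY fun x => log (pm μ X x),
    sum_pm_pair_mul_snd hX hY fun y => log (pm μ Y y), sum_mul_log_pm_eq_neg_entH,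
    sum_mul_log_pm_eq_neg_entH, sum_mul_log_pm_eq_neg_entH, mutInf]
  ring

lemma mutInf_nonneg [IsProbabilityMeasure μ] {X : Ω → S} {Y : Ω → T} (hX : Measurable X)
    (hY : Measurable Y) : 0 ≤ mutInf μ X Y := by
  rw [mutInf_eq_sum_klFun hX hY]
  exact sum_nonneg fun _ _ => mul_nonneg (mul_nonneg (pm_nonneg _ _) (pm_nonneg _ _))
    (klFun_nonneg (div_nonneg (pm_nonneg _ _) (mul_nonneg (pm_nonneg _ _) (pm_nonneg _ _))))

lemma pm_pair_eq_mul_of_mutInf_eq_zero [IsProbabilityMeasure μ] {X : Ω → S} {Y : Ω → T}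
    (hX : Measurable X) (hY : Measurable Y) (hI : mutInf μ X Y = 0) (x : S) (y : T) :
    pm μ (fun ω => (X ω, Y ω)) (x, y) = pm μ X x * pm μ Y y := by
  rw [mutInf_eq_sum_klFun hX hY, sum_eq_zero_iff_of_nonneg fun _ _ => mul_nonneg
    (mul_nonneg (pm_nonneg _ _) (pm_nonneg _ _)) (klFun_nonneg (div_nonneg (pm_nonneg _ _)
    (mul_nonneg (pm_nonneg _ _) (pm_nonneg _ _))))] at hI
  rcases mul_eq_zero.1 (hI (x, y) (mem_univ _)) with hq | hkl
  · rcases mul_eq_zero.1 hq with h | h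
    · rw [h, zero_mul]; exact le_antisymm (h ▸ pm_pair_le_pm_fst X Y x y) (pm_nonneg _ _)
    · rw [h, mul_zero]; exact le_antisymm (h ▸ pm_pair_le_pm_snd X Y x y) (pm_nonneg _ _)
  · rw [klFun_eq_zero_iff (div_nonneg (pm_nonneg _ _) (mul_nonneg (pm_nonneg _ _)
      (pm_nonneg _ _)))] at hkl
    exact (div_eq_one_iff_eq (by rintro h; simp [h] at hkl)).1 hkl

lemma sum_pm_mul_pm_cond [IsFiniteMeasure μ] {Q : Ω → T} (hQ : Measurable Q) {X : Ω → S}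
    (hX : Measurable X) (x : S) : ∑ t, pm μ Q t * pm μ[|Q ← t] X x = pm μ X x := by
  simp_rw [mul_comm (pm μ Q _), pm_cond_mul_pm hQ, pm_eq_sum_pm_pair_left hX hQ]

lemma entH_pair_eq_add_sum [IsFiniteMeasure μ] {Q : Ω → T} (hQ : Measurable Q) {X : Ω → S}
    (hX : Measurable X) :
    entH μ (fun ω => (X ω, Q ω)) = entH μ Q + ∑ t, pm μ Q t * entH μ[|Q ← t] X := by
  have hfiber : ∀ t, ∑ x, negMulLog (pm μ (fun ω => (X ω, Q ω)) (x, t))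
      = negMulLog (pm μ Q t) + pm μ Q t * entH μ[|Q ← t] X := by
    intro t
    simp_rw [← pm_cond_mul_pm hQ, negMulLog_mul, sum_add_distrib, ← sum_mul, ← mul_sum, entH]
    by_cases ht : pm μ Q t = 0
    · simp [ht]
    · have := isProbabilityMeasure_cond_of_pm_ne_zero ht
      rw [sum_pm _ hX, one_mul, add_comm]
  rw [entH, Fintype.sum_prod_type_right, sum_congr rfl fun t _ => hfiber t, sum_add_distrib, entH]

lemma condEnt_eq_sum [IsFiniteMeasure μ] {Q : Ω → T} (hQ : Measurable Q) {X : Ω → S}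
    (hX : Measurable X) : condEnt μ X Q = ∑ t, pm μ Q t * entH μ[|Q ← t] X := by
  rw [condEnt, entH_pair_eq_add_sum hQ hX, add_sub_cancel_left]

lemma condMutInf_eq_sum [IsFiniteMeasure μ] {Q : Ω → T} (hQ : Measurable Q) {X : Ω → S}
    {Y : Ω → T'} (hX : Measurable X) (hY : Measurable Y) :
    condMutInf μ X Y Q = ∑ t, pm μ Q t * mutInf μ[|Q ← t] X Y := by
  simp_rw [condMutInf, entH_pair_eq_add_sum hQ hX, entH_pair_eq_add_sum hQ hY,
    entH_pair_eq_add_sum hQ (hX.prodMk hY), mutInf, mul_sub, mul_add, sum_sub_distrib,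
    sum_add_distrib]
  ring

lemma mutInf_cond_eq_zero [IsFiniteMeasure μ] {Q : Ω → T} (hQ : Measurable Q) {X : Ω → S}
    {Y : Ω → T'} (hX : Measurable X) (hY : Measurable Y) (hI : condMutInf μ X Y Q = 0) {t : T}
    (ht : pm μ Q t ≠ 0) : mutInf μ[|Q ← t] X Y = 0 := by
  have hterm : ∀ t ∈ univ, 0 ≤ pm μ Q t * mutInf μ[|Q ← t] X Y := by
    intro t _
    by_cases ht : pm μ Q t = 0
    · simp [ht]
    · have := isProbabilityMeasure_cond_of_pm_ne_zero ht
      exact mul_nonneg (pm_nonneg _ _) (mutInf_nonneg hX hY)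
  rw [condMutInf_eq_sum hQ hX hY, sum_eq_zero_iff_of_nonneg hterm] at hI
  exact (mul_eq_zero.1 (hI t (mem_univ t))).resolve_left ht

end Entropy

section EqualityIndicator

variable {Ω A : Type*} [MeasurableSpace Ω] {μ : Measure Ω} [DecidableEq A] {X Y : Ω → A}
  {Z : Ω → Fin 2}

/-- Since `Z` is a function of both `U = (X, Z)` and `V = (Y, Z)`, independence of `U` and `V`
makes the support of `(X, Y)` a rectangle on which `Z` is constant. -/
lemma pm_pos_and_iff_of_pm_pair_eq_mul [IsFiniteMeasure μ]
    (hZ : Z = fun ω => if X ω = Y ω then 1 else 0)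
    (hfac : ∀ u v, pm μ (fun ω => ((X ω, Z ω), (Y ω, Z ω))) (u, v)
      = pm μ (fun ω => (X ω, Z ω)) u * pm μ (fun ω => (Y ω, Z ω)) v)
    {a b a' b' : A} (h : 0 < pm μ (fun ω => (X ω, Y ω)) (a, b))
    (h' : 0 < pm μ (fun ω => (X ω, Y ω)) (a', b')) :
    0 < pm μ (fun ω => (X ω, Y ω)) (a, b') ∧ (a = b ↔ a' = b') := by
  subst hZ
  have hU : pm μ (fun ω => (X ω, Y ω)) (a, b)
      ≤ pm μ (fun ω => (X ω, if X ω = Y ω then (1 : Fin 2) else 0))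
        (a, if a = b then 1 else 0) :=
    pm_mono (by simp +contextual [Prod.ext_iff])
  have hV : pm μ (fun ω => (X ω, Y ω)) (a', b')
      ≤ pm μ (fun ω => (Y ω, if X ω = Y ω then (1 : Fin 2) else 0))
        (b', if a' = b' then 1 else 0) :=
    pm_mono (by simp +contextual [Prod.ext_iff])
  have hpos := hfac _ _ ▸ mul_pos (h.trans_le hU) (h'.trans_le hV)
  refine ⟨hpos.trans_le (pm_mono fun ω hω => by simp_all [Prod.ext_iff]), ?_⟩
  obtain ⟨ω, hω⟩ := exists_eq_of_pm_pos hpos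
  simp only [Prod.ext_iff] at hω
  have hzz : (if a = b then (1 : Fin 2) else 0) = if a' = b' then 1 else 0 :=
    hω.1.2.symm.trans hω.2.2
  split_ifs at hzz <;> simp_all

variable [Fintype A] [MeasurableSpace A] [MeasurableSingletonClass A]

lemma measurable_of_eq_ite (hX : Measurable X) (hY : Measurable Y)
    (hZ : Z = fun ω => if X ω = Y ω then 1 else 0) : Measurable Z :=
  hZ ▸ (Measurable.of_discrete (f := fun ab : A × A => if ab.1 = ab.2 then (1 : Fin 2) else 0)).comp
    (hX.prodMk hY)

lemma entH_add_entH_le_zero_of_pm_diag_pos [IsProbabilityMeasure μ] (hX : Measurable X)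
    (hY : Measurable Y) (hZ : Z = fun ω => if X ω = Y ω then 1 else 0)
    (hrect : ∀ {a b a' b' : A}, 0 < pm μ (fun ω => (X ω, Y ω)) (a, b) →
      0 < pm μ (fun ω => (X ω, Y ω)) (a', b') →
      0 < pm μ (fun ω => (X ω, Y ω)) (a, b') ∧ (a = b ↔ a' = b'))
    {a₀ : A} (h₀ : 0 < pm μ (fun ω => (X ω, Y ω)) (a₀, a₀)) :
    entH μ (fun ω => (X ω, Z ω)) + entH μ (fun ω => (Y ω, Z ω)) ≤ 0 ∧ pm μ Z 1 = 1 := by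
  have hZsum : pm μ Z 0 + pm μ Z 1 = 1 := by
    simpa [Fin.sum_univ_two] using sum_pm μ (measurable_of_eq_ite hX hY hZ)
  subst hZ
  have hsupp : ∀ ab, 0 < pm μ (fun ω => (X ω, Y ω)) ab → ab = (a₀, a₀) := by
    rintro ⟨a, b⟩ h
    obtain rfl : a = b := (hrect h₀ h).2.1 rfl
    obtain rfl : a = a₀ := (hrect (hrect h h₀).1 h₀).2.2 rfl
    rfl
  have hU := entH_comp_le_log_card (μ := μ) (s := {(a₀, 1)}) (hX.prodMk hY)
    (g := fun ab : A × A => (ab.1, if ab.1 = ab.2 then (1 : Fin 2) else 0))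
    fun ab h => by simp [hsupp ab h]
  have hV := entH_comp_le_log_card (μ := μ) (s := {(a₀, 1)}) (hX.prodMk hY)
    (g := fun ab : A × A => (ab.2, if ab.1 = ab.2 then (1 : Fin 2) else 0))
    fun ab h => by simp [hsupp ab h]
  have hZ0 := pm_comp_eq_zero (μ := μ) (y := 0) (hX.prodMk hY)
    (g := fun ab : A × A => if ab.1 = ab.2 then (1 : Fin 2) else 0)
    fun ab h => by simp [hsupp ab h]
  simp only [card_singleton, Nat.cast_one, log_one] at hU hV
  exact ⟨by linarith, by linarith⟩

lemma entH_add_entH_le_of_pm_offDiag_pos [IsProbabilityMeasure μ] (hX : Measurable X)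
    (hY : Measurable Y) (hZ : Z = fun ω => if X ω = Y ω then 1 else 0)
    (hrect : ∀ {a b a' b' : A}, 0 < pm μ (fun ω => (X ω, Y ω)) (a, b) →
      0 < pm μ (fun ω => (X ω, Y ω)) (a', b') →
      0 < pm μ (fun ω => (X ω, Y ω)) (a, b') ∧ (a = b ↔ a' = b'))
    {a₀ b₀ : A} (h₀ : 0 < pm μ (fun ω => (X ω, Y ω)) (a₀, b₀)) (hd : a₀ ≠ b₀) :
    entH μ (fun ω => (X ω, Z ω)) + entH μ (fun ω => (Y ω, Z ω))
      ≤ 2 * log (Fintype.card A / 2) ∧ pm μ Z 1 = 0 := by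
  subst hZ
  have hoff : ∀ ab, 0 < pm μ (fun ω => (X ω, Y ω)) ab → ab.1 ≠ ab.2 :=
    fun ⟨a, b⟩ h hab => hd ((hrect h₀ h).2.2 hab)
  set SX : Finset A := {a | ∃ b, 0 < pm μ (fun ω => (X ω, Y ω)) (a, b)}
  set SY : Finset A := {b | ∃ a, 0 < pm μ (fun ω => (X ω, Y ω)) (a, b)}
  have hdisj : Disjoint SX SY := disjoint_left.2 fun c hcX hcY => by
    obtain ⟨b, hb⟩ := (mem_filter.1 hcX).2
    obtain ⟨a, ha⟩ := (mem_filter.1 hcY).2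
    exact hoff (c, c) (hrect hb ha).1 rfl
  have hU := entH_comp_le_log_card (μ := μ) (s := SX ×ˢ {0}) (hX.prodMk hY)
    (g := fun ab : A × A => (ab.1, if ab.1 = ab.2 then (1 : Fin 2) else 0)) fun ab h => by
      simp only [SX, hoff ab h, mem_product, mem_filter]
      exact ⟨⟨mem_univ _, ab.2, h⟩, by simp⟩
  have hV := entH_comp_le_log_card (μ := μ) (s := SY ×ˢ {0}) (hX.prodMk hY)
    (g := fun ab : A × A => (ab.2, if ab.1 = ab.2 then (1 : Fin 2) else 0)) fun ab h => by
      simp only [SY, hoff ab h, mem_product, mem_filter]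
      exact ⟨⟨mem_univ _, ab.1, h⟩, by simp⟩
  have hcard : (#SX : ℝ) + #SY ≤ Fintype.card A := by
    exact_mod_cast (card_union_of_disjoint hdisj).symm.trans_le (card_le_univ _)
  have ha₀ : a₀ ∈ SX := mem_filter.2 ⟨mem_univ _, b₀, h₀⟩
  have hb₀ : b₀ ∈ SY := mem_filter.2 ⟨mem_univ _, a₀, h₀⟩
  have hSX : (0 : ℝ) < #SX := by exact_mod_cast card_pos.2 ⟨a₀, ha₀⟩
  have hSY : (0 : ℝ) < #SY := by exact_mod_cast card_pos.2 ⟨b₀, hb₀⟩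
  rw [card_product, card_singleton, mul_one] at hU hV
  refine ⟨by linarith [log_add_log_le_two_mul_log_half hSX hSY hcard], ?_⟩
  exact pm_comp_eq_zero (hX.prodMk hY)
    (g := fun ab : A × A => if ab.1 = ab.2 then (1 : Fin 2) else 0)
    fun ab h => by simp [hoff ab h]

lemma entH_add_entH_le_of_mutInf_eq_zero [IsProbabilityMeasure μ] (hX : Measurable X)
    (hY : Measurable Y) (hZ : Z = fun ω => if X ω = Y ω then 1 else 0)
    (hI : mutInf μ (fun ω => (X ω, Z ω)) (fun ω => (Y ω, Z ω)) = 0) :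
    entH μ (fun ω => (X ω, Z ω)) + entH μ (fun ω => (Y ω, Z ω))
      ≤ (1 - pm μ Z 1) * (2 * log (Fintype.card A / 2)) := by
  have hZm := measurable_of_eq_ite hX hY hZ
  have hrect {a b a' b' : A} := pm_pos_and_iff_of_pm_pair_eq_mul (a := a) (b := b) (a' := a')
    (b' := b') hZ (pm_pair_eq_mul_of_mutInf_eq_zero (hX.prodMk hZm) (hY.prodMk hZm) hI)
  obtain ⟨⟨a₀, b₀⟩, h₀⟩ := exists_pm_pos μ (hX.prodMk hY)
  by_cases hd : a₀ = b₀
  · subst hd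
    obtain ⟨hH, hZ1⟩ := entH_add_entH_le_zero_of_pm_diag_pos hX hY hZ hrect h₀
    rw [hZ1, sub_self, zero_mul]
    exact hH
  · obtain ⟨hH, hZ1⟩ := entH_add_entH_le_of_pm_offDiag_pos hX hY hZ hrect h₀ hd
    rw [hZ1, sub_zero, one_mul]
    exact hH

lemma pm_one_eq_inv_card [IsProbabilityMeasure μ] (hX : Measurable X) (hY : Measurable Y)
    (hindep : IndepFun X Y μ) (hXunif : ∀ a, μ (X ⁻¹' {a}) = (Fintype.card A : ℝ≥0∞)⁻¹)
    (hZ : Z = fun ω => if X ω = Y ω then 1 else 0) : pm μ Z 1 = (Fintype.card A : ℝ)⁻¹ := by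
  subst hZ
  calc pm μ (fun ω => if X ω = Y ω then (1 : Fin 2) else 0) 1
      = ∑ ab : A × A with (if ab.1 = ab.2 then (1 : Fin 2) else 0) = 1,
          pm μ (fun ω => (X ω, Y ω)) ab :=
        pm_comp (hX.prodMk hY) (fun ab : A × A => if ab.1 = ab.2 then (1 : Fin 2) else 0) 1
    _ = ∑ b, pm μ (fun ω => (X ω, Y ω)) (b, b) := by
        rw [sum_filter, Fintype.sum_prod_type]
        exact sum_congr rfl fun a _ => by simp
    _ = ∑ b, (Fintype.card A : ℝ)⁻¹ * pm μ Y b := by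
        refine sum_congr rfl fun b _ => ?_
        rw [pm_pair_eq_mul_of_indepFun hindep, pm, hXunif, ENNReal.toReal_inv,
          ENNReal.toReal_natCast]
    _ = (Fintype.card A : ℝ)⁻¹ := by rw [← mul_sum, sum_pm μ hY, mul_one]

lemma condEnt_add_condEnt_le_of_condMutInf_eq_zero [IsProbabilityMeasure μ] {T : Type*} [Fintype T]
    [MeasurableSpace T] [MeasurableSingletonClass T] {Q : Ω → T} (hX : Measurable X)
    (hY : Measurable Y) (hZ : Z = fun ω => if X ω = Y ω then 1 else 0) (hQ : Measurable Q)
    (hI : condMutInf μ (fun ω => (X ω, Z ω)) (fun ω => (Y ω, Z ω)) Q = 0) :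
    condEnt μ (fun ω => (X ω, Z ω)) Q + condEnt μ (fun ω => (Y ω, Z ω)) Q
      ≤ (1 - pm μ Z 1) * (2 * log (Fintype.card A / 2)) := by
  have hZm := measurable_of_eq_ite hX hY hZ
  have hU := hX.prodMk hZm
  have hV := hY.prodMk hZm
  set c := 2 * log (Fintype.card A / 2)
  have hslice : ∀ t, pm μ Q t * (entH μ[|Q ← t] (fun ω => (X ω, Z ω))
      + entH μ[|Q ← t] (fun ω => (Y ω, Z ω))) ≤ pm μ Q t * ((1 - pm μ[|Q ← t] Z 1) * c) := by
    intro t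
    by_cases ht : pm μ Q t = 0
    · simp [ht]
    have := isProbabilityMeasure_cond_of_pm_ne_zero ht
    exact mul_le_mul_of_nonneg_left (entH_add_entH_le_of_mutInf_eq_zero hX hY hZ
      (mutInf_cond_eq_zero hQ hU hV hI ht)) (pm_nonneg _ _)
  calc condEnt μ (fun ω => (X ω, Z ω)) Q + condEnt μ (fun ω => (Y ω, Z ω)) Q
      = ∑ t, pm μ Q t * (entH μ[|Q ← t] (fun ω => (X ω, Z ω))
          + entH μ[|Q ← t] (fun ω => (Y ω, Z ω))) := by
        simp_rw [condEnt_eq_sum hQ hU, condEnt_eq_sum hQ hV, mul_add, sum_add_distrib]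
    _ ≤ ∑ t, pm μ Q t * ((1 - pm μ[|Q ← t] Z 1) * c) := sum_le_sum fun t _ => hslice t
    _ = (∑ t, pm μ Q t - ∑ t, pm μ Q t * pm μ[|Q ← t] Z 1) * c := by
        rw [← sum_sub_distrib, sum_mul]
        exact sum_congr rfl fun t _ => by ring
    _ = (1 - pm μ Z 1) * c := by rw [sum_pm μ hQ, sum_pm_mul_pm_cond hQ hZm]

end EqualityIndicator

theorem even_k_EQ_wyner_upper_bound_general
    {Ω : Type*} [MeasurableSpace Ω] (μ : Measure Ω) [IsProbabilityMeasure μ]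
    (k : ℕ)
    {A : Type*} [Fintype A] [DecidableEq A]
    [MeasurableSpace A] [MeasurableSingletonClass A] (hA : Fintype.card A = k)
    (X Y : Ω → A) (hX : Measurable X) (hY : Measurable Y)
    (hindep : IndepFun X Y μ)
    (hXunif : ∀ a : A, μ (X ⁻¹' {a}) = (k : ℝ≥0∞)⁻¹)
    (Z : Ω → Fin 2) (hZ : Z = fun ω => if X ω = Y ω then 1 else 0)
    {T : Type*} [Fintype T] [MeasurableSpace T] [MeasurableSingletonClass T]
    (Q : Ω → T) (hQ : Measurable Q)
    (hQci : condMutInf μ (fun ω => (X ω, Z ω)) (fun ω => (Y ω, Z ω)) Q = 0) :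
    condEnt μ (fun ω => (X ω, Z ω)) Q + condEnt μ (fun ω => (Y ω, Z ω)) Q
      ≤ 2 * (1 - 1 / (k : ℝ)) * Real.log ((k : ℝ) / 2) := by
  subst hA
  calc condEnt μ (fun ω => (X ω, Z ω)) Q + condEnt μ (fun ω => (Y ω, Z ω)) Q
      ≤ (1 - pm μ Z 1) * (2 * log (Fintype.card A / 2)) :=
        condEnt_add_condEnt_le_of_condMutInf_eq_zero hX hY hZ hQ hQci
    _ = 2 * (1 - 1 / (Fintype.card A : ℝ)) * log (Fintype.card A / 2) := by
        rw [pm_one_eq_inv_card hX hY hindep hXunif hZ]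
        ring

/-- `k`-ary EQ, `k` even: with `U = (X,Z)`, `V = (Y,Z)`, every finite-valued `Q` with
`I(U ; V | Q) = 0` satisfies `H(U|Q) + H(V|Q) ≤ 2 (1 − 1/k) log (k/2)`. -/
theorem even_k_EQ_wyner_upper_bound
    {Ω : Type*} [MeasurableSpace Ω] (μ : Measure Ω) [IsProbabilityMeasure μ]
    (k : ℕ) (hk : Even k) (hk2 : 2 ≤ k)
    {A : Type*} [Fintype A] [DecidableEq A]
    [MeasurableSpace A] [MeasurableSingletonClass A] (hA : Fintype.card A = k)
    (X Y : Ω → A) (hX : Measurable X) (hY : Measurable Y)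
    (hindep : IndepFun X Y μ)
    (hXunif : ∀ a : A, μ (X ⁻¹' {a}) = (k : ℝ≥0∞)⁻¹)
    (hYunif : ∀ a : A, μ (Y ⁻¹' {a}) = (k : ℝ≥0∞)⁻¹)
    (Z : Ω → Fin 2) (hZ : Z = fun ω => if X ω = Y ω then 1 else 0)
    {T : Type*} [Fintype T] [MeasurableSpace T] [MeasurableSingletonClass T]
    (Q : Ω → T) (hQ : Measurable Q)
    (hQci : condMutInf μ (fun ω => (X ω, Z ω)) (fun ω => (Y ω, Z ω)) Q = 0) :
    condEnt μ (fun ω => (X ω, Z ω)) Q + condEnt μ (fun ω => (Y ω, Z ω)) Q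
      ≤ 2 * (1 - 1 / (k : ℝ)) * Real.log ((k : ℝ) / 2) :=
  even_k_EQ_wyner_upper_bound_general μ k hA X Y hX hY hindep hXunif Z hZ Q hQ hQci
end

section
/- Let k ≥ 2 be an even integer. Let X and Y be independent random variables, each uniformly distributed on a k-element alphabet, and let Z = 1 if X = Y and Z = 0 otherwise. Let M be any finite-valued random variable on the same probability space with I(X ; Y | M) = 0, H(Z | (M, X)) = 0 and H(Z | (M, Y)) = 0. Then I(X ; M | Y) + I(Y ; M | X) ≥ 2 log 2 + (2/k) · log(k/2). -/
/-!
Let `P(m, x, y)` be the joint law of `(M, X, Y)`. Conditional independence of `X` and `Y` given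
`M` makes every slice `P(m, ·, ·)` the product of its marginals, a rectangle `S_m × T_m`. Since
`Z` is a function of `(M, X)` and of `(M, Y)`, a rectangle that meets the diagonal is a single
diagonal point; every other rectangle avoids the diagonal, so `|S_m| + |T_m| ≤ k` and
`H(X | M = m) + H(Y | M = m) ≤ log |S_m| + log |T_m| ≤ 2 log (k / 2)`. The diagonal has mass
`1 / k`, whence `H(X | M) + H(Y | M) ≤ (1 - 1 / k) * 2 log (k / 2)`, and under conditional
independence the information cost equals `H(X | Y) + H(Y | X) - H(X | M) - H(Y | M)`
`= 2 log k - H(X | M) - H(Y | M)`.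
-/

open MeasureTheory ProbabilityTheory Real
open scoped ENNReal

open Finset InformationTheory

section Gibbs

lemma mul_log_sub_log_add_sub_eq_mul_klFun {p q : ℝ} (hp : 0 ≤ p) (hq : 0 < q) :
    p * (log p - log q) + q - p = q * klFun (p / q) := by
  rcases hp.eq_or_lt with rfl | hp
  · simp [klFun]
  · rw [klFun, ← log_div hp.ne' hq.ne']
    field_simp

variable {p q : ℝ}

lemma mul_log_sub_log_add_sub_nonneg (hp : 0 ≤ p) (hq : 0 ≤ q) (hpq : q = 0 → p = 0) :
    0 ≤ p * (log p - log q) + q - p := by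
  rcases hq.eq_or_lt with rfl | hq
  · simp [hpq rfl]
  · rw [mul_log_sub_log_add_sub_eq_mul_klFun hp hq]
    exact mul_nonneg hq.le (klFun_nonneg (div_nonneg hp hq.le))

lemma eq_of_mul_log_sub_log_add_sub_eq_zero (hp : 0 ≤ p) (hq : 0 ≤ q) (hpq : q = 0 → p = 0)
    (h : p * (log p - log q) + q - p = 0) : p = q := by
  rcases hq.eq_or_lt with rfl | hq
  · exact hpq rfl
  · rw [mul_log_sub_log_add_sub_eq_mul_klFun hp hq, mul_eq_zero,
      klFun_eq_zero_iff (div_nonneg hp hq.le), div_eq_one_iff_eq hq.ne'] at h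
    exact h.resolve_left hq.ne'

variable {ι : Type*} [Fintype ι] {p q : ι → ℝ}

lemma sum_mul_log_sub_log_eq_sum_add_sub (hsum : ∑ i, p i = ∑ i, q i) :
    ∑ i, p i * (log (p i) - log (q i)) = ∑ i, (p i * (log (p i) - log (q i)) + q i - p i) := by
  simp only [sum_sub_distrib, sum_add_distrib, hsum, add_sub_cancel_right]

theorem sum_mul_log_sub_log_nonneg (hp : ∀ i, 0 ≤ p i) (hq : ∀ i, 0 ≤ q i)
    (hpq : ∀ i, q i = 0 → p i = 0) (hsum : ∑ i, p i = ∑ i, q i) :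
    0 ≤ ∑ i, p i * (log (p i) - log (q i)) := by
  rw [sum_mul_log_sub_log_eq_sum_add_sub hsum]
  exact sum_nonneg fun i _ ↦ mul_log_sub_log_add_sub_nonneg (hp i) (hq i) (hpq i)

theorem eq_of_sum_mul_log_sub_log_eq_zero (hp : ∀ i, 0 ≤ p i) (hq : ∀ i, 0 ≤ q i)
    (hpq : ∀ i, q i = 0 → p i = 0) (hsum : ∑ i, p i = ∑ i, q i)
    (h : ∑ i, p i * (log (p i) - log (q i)) = 0) (i : ι) : p i = q i := by
  rw [sum_mul_log_sub_log_eq_sum_add_sub hsum, sum_eq_zero_iff_of_nonneg fun i _ ↦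
    mul_log_sub_log_add_sub_nonneg (hp i) (hq i) (hpq i)] at h
  exact eq_of_mul_log_sub_log_add_sub_eq_zero (hp i) (hq i) (hpq i) (h i (mem_univ i))

end Gibbs

section MutualInfo

variable {α β : Type*} [Fintype α] [Fintype β]

/-- For weights `P` of total mass `c` this is `c` times the mutual information of the two
coordinates under `P / c`; for the slice `P(m, ·, ·)` of a joint law it is
`P(M = m) * I(X ; Y | M = m)`. -/
noncomputable def weightedMutualInfo (P : α → β → ℝ) : ℝ :=
  ∑ x, negMulLog (∑ y, P x y) + ∑ y, negMulLog (∑ x, P x y)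
    - ∑ x, ∑ y, negMulLog (P x y) - negMulLog (∑ x, ∑ y, P x y)

variable {P : α → β → ℝ}

lemma mul_log_mul_eq_of_le {p a b : ℝ} (hp : 0 ≤ p) (ha : p ≤ a) (hb : p ≤ b) :
    p * log (a * b) = p * log a + p * log b := by
  rcases hp.eq_or_lt with rfl | hp
  · simp
  · rw [log_mul (hp.trans_le ha).ne' (hp.trans_le hb).ne', mul_add]

lemma mul_weightedMutualInfo_eq_sum (hP : ∀ x y, 0 ≤ P x y) :
    (∑ x, ∑ y, P x y) * weightedMutualInfo P =
      ∑ z : α × β, (∑ x, ∑ y, P x y) * P z.1 z.2 *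
        (log ((∑ x, ∑ y, P x y) * P z.1 z.2) - log ((∑ y, P z.1 y) * ∑ x, P x z.2)) := by
  set c := ∑ x, ∑ y, P x y with hc
  have hrow : ∀ x y, P x y ≤ ∑ y', P x y' := fun x y ↦
    single_le_sum (fun y' _ ↦ hP x y') (mem_univ y)
  have hcol : ∀ x y, P x y ≤ ∑ x', P x' y := fun x y ↦
    single_le_sum (fun x' _ ↦ hP x' y) (mem_univ x)
  have hterm : ∀ x y, c * P x y * (log (c * P x y) - log ((∑ y', P x y') * ∑ x', P x' y)) =
      -(P x y * negMulLog c) - c * negMulLog (P x y)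
        - c * (P x y * log (∑ y', P x y')) - c * (P x y * log (∑ x', P x' y)) := by
    intro x y
    have h := negMulLog_mul c (P x y)
    have h' := mul_log_mul_eq_of_le (hP x y) (hrow x y) (hcol x y)
    simp only [negMulLog] at h ⊢
    linear_combination -h - c * h'
  have hrowLog : ∑ x, (∑ y, P x y) * log (∑ y, P x y) = -∑ x, negMulLog (∑ y, P x y) := by
    simp [negMulLog]
  have hcolLog : ∑ x, ∑ y, P x y * log (∑ x', P x' y) = -∑ y, negMulLog (∑ x, P x y) := by
    rw [sum_comm]
    simp [negMulLog, ← sum_mul]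
  rw [Fintype.sum_prod_type]
  simp only [hterm, sum_sub_distrib, sum_neg_distrib, ← mul_sum, ← sum_mul, hrowLog, hcolLog]
  rw [← hc, weightedMutualInfo]
  ring

lemma eq_zero_of_sum_sum_eq_zero (hP : ∀ x y, 0 ≤ P x y) (h : ∑ x, ∑ y, P x y = 0)
    (x : α) (y : β) : P x y = 0 :=
  (sum_eq_zero_iff_of_nonneg fun y _ ↦ hP x y).1 ((sum_eq_zero_iff_of_nonneg fun x _ ↦
    sum_nonneg fun y _ ↦ hP x y).1 h x (mem_univ x)) y (mem_univ y)

lemma eq_zero_of_rowSum_mul_colSum_eq_zero (hP : ∀ x y, 0 ≤ P x y) {x : α} {y : β}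
    (h : (∑ y', P x y') * (∑ x', P x' y) = 0) : P x y = 0 := by
  rcases mul_eq_zero.1 h with h | h
  · exact le_antisymm (h ▸ single_le_sum (fun y' _ ↦ hP x y') (mem_univ y)) (hP x y)
  · exact le_antisymm (h ▸ single_le_sum (fun x' _ ↦ hP x' y) (mem_univ x)) (hP x y)

lemma sum_mul_sum_eq_sum_rowSum_mul_colSum :
    (∑ x, ∑ y, P x y) * (∑ x, ∑ y, P x y) =
      ∑ z : α × β, (∑ y, P z.1 y) * ∑ x, P x z.2 := by
  nth_rw 2 [sum_comm]
  rw [Fintype.sum_prod_type, sum_mul_sum]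

theorem weightedMutualInfo_nonneg (hP : ∀ x y, 0 ≤ P x y) : 0 ≤ weightedMutualInfo P := by
  rcases (sum_nonneg fun x _ ↦ sum_nonneg fun y _ ↦ hP x y).eq_or_lt with hc | hc
  · simp [weightedMutualInfo, eq_zero_of_sum_sum_eq_zero hP hc.symm]
  · refine (mul_nonneg_iff_of_pos_left hc).mp ?_
    rw [mul_weightedMutualInfo_eq_sum hP]
    refine sum_mul_log_sub_log_nonneg (fun z ↦ mul_nonneg hc.le (hP z.1 z.2))
      (fun z ↦ mul_nonneg (sum_nonneg fun y _ ↦ hP z.1 y) (sum_nonneg fun x _ ↦ hP x z.2))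
      (fun z h ↦ by rw [eq_zero_of_rowSum_mul_colSum_eq_zero hP h, mul_zero]) ?_
    rw [← mul_sum, Fintype.sum_prod_type, sum_mul_sum_eq_sum_rowSum_mul_colSum]

theorem mul_eq_rowSum_mul_colSum_of_weightedMutualInfo_eq_zero (hP : ∀ x y, 0 ≤ P x y)
    (h : weightedMutualInfo P = 0) (x : α) (y : β) :
    (∑ x, ∑ y, P x y) * P x y = (∑ y, P x y) * ∑ x, P x y := by
  have hc : 0 ≤ ∑ x, ∑ y, P x y := sum_nonneg fun x _ ↦ sum_nonneg fun y _ ↦ hP x y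
  refine eq_of_sum_mul_log_sub_log_eq_zero (fun z ↦ mul_nonneg hc (hP z.1 z.2))
    (fun z ↦ mul_nonneg (sum_nonneg fun y _ ↦ hP z.1 y) (sum_nonneg fun x _ ↦ hP x z.2))
    (fun z h ↦ by rw [eq_zero_of_rowSum_mul_colSum_eq_zero hP h, mul_zero]) ?_ ?_ (x, y)
  · rw [← mul_sum, Fintype.sum_prod_type, sum_mul_sum_eq_sum_rowSum_mul_colSum]
  · rw [← mul_weightedMutualInfo_eq_sum hP, h, mul_zero]

end MutualInfo

lemma negMulLog_add_lt_add {u v : ℝ} (hu : 0 < u) (hv : 0 < v) :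
    negMulLog (u + v) < negMulLog u + negMulLog v := by
  have hu' : log u < log (u + v) := log_lt_log hu (by linarith)
  have hv' : log v < log (u + v) := log_lt_log hv (by linarith)
  simp only [negMulLog]
  nlinarith [mul_pos hu (sub_pos.2 hu'), mul_pos hv (sub_pos.2 hv')]

lemma negMulLog_add_le_add {u v : ℝ} (hu : 0 ≤ u) (hv : 0 ≤ v) :
    negMulLog (u + v) ≤ negMulLog u + negMulLog v := by
  rcases hu.eq_or_lt with rfl | hu
  · simp
  rcases hv.eq_or_lt with rfl | hv
  · simp
  exact (negMulLog_add_lt_add hu hv).le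

lemma log_add_log_le_two_mul_log_half_s16 {s t n : ℝ} (hs : 0 < s) (ht : 0 < t) (h : s + t ≤ n) :
    log s + log t ≤ 2 * log (n / 2) := by
  have hn : 0 < n / 2 := by linarith
  rw [two_mul, ← log_mul hs.ne' ht.ne', ← log_mul hn.ne' hn.ne']
  exact log_le_log (mul_pos hs ht) (by nlinarith [sq_nonneg (s - t)])

section Support

variable {ι : Type*} [Fintype ι] {w : ι → ℝ}

theorem sum_negMulLog_le_of_support_subset (hw : ∀ i, 0 ≤ w i) {s : Finset ι}
    (hs : ∀ i, w i ≠ 0 → i ∈ s) :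
    ∑ i, negMulLog (w i) ≤ negMulLog (∑ i, w i) + (∑ i, w i) * log #s := by
  have hvanish : ∀ i ∉ s, w i = 0 := fun i hi ↦ by_contra fun h ↦ hi (hs i h)
  rw [← sum_subset (subset_univ s) fun i _ hi ↦ by rw [hvanish i hi, negMulLog_zero],
    ← sum_subset (subset_univ s) fun i _ hi ↦ hvanish i hi]
  rcases s.eq_empty_or_nonempty with rfl | hne
  · simp
  have hn : (0 : ℝ) < #s := by exact_mod_cast hne.card_pos
  have hjensen := concaveOn_negMulLog.le_map_sum (t := s) (w := fun _ ↦ (#s : ℝ)⁻¹) (p := w)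
    (fun _ _ ↦ by positivity) (by simp [hn.ne']) (fun i _ ↦ Set.mem_Ici.2 (hw i))
  have hinv : negMulLog (#s : ℝ)⁻¹ = (#s : ℝ)⁻¹ * log #s := by simp [negMulLog, log_inv]
  simp only [smul_eq_mul, ← mul_sum, negMulLog_mul, hinv] at hjensen
  calc ∑ i ∈ s, negMulLog (w i) = #s * ((#s : ℝ)⁻¹ * ∑ i ∈ s, negMulLog (w i)) := by
        field_simp
    _ ≤ #s * ((∑ i ∈ s, w i) * ((#s : ℝ)⁻¹ * log #s) +
          (#s : ℝ)⁻¹ * negMulLog (∑ i ∈ s, w i)) := by gcongr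
    _ = negMulLog (∑ i ∈ s, w i) + (∑ i ∈ s, w i) * log #s := by
        field_simp
        ring

lemma eq_zero_of_sum_eq_of_ne (hw : ∀ i, 0 ≤ w i) {i j : ι} (h : ∑ k, w k = w i)
    (hji : j ≠ i) : w j = 0 := by
  by_contra hj
  exact (single_lt_sum hji (mem_univ i) (mem_univ j) ((hw j).lt_of_ne' hj)
    fun k _ _ ↦ hw k).ne' h

end Support

section Rectangle

variable {α : Type*} [Fintype α] {P : α → α → ℝ}

lemma eq_and_eq_of_ne_zero_of_diag_ne_zero (hP : ∀ x y, 0 ≤ P x y)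
    (hindep : weightedMutualInfo P = 0) (hrow : ∀ x, P x x ≠ 0 → ∑ y, P x y = P x x)
    (hcol : ∀ y, P y y ≠ 0 → ∑ x, P x y = P y y) {x₀ : α} (h₀ : P x₀ x₀ ≠ 0) {x y : α}
    (hxy : P x y ≠ 0) : x = x₀ ∧ y = x₀ := by
  have hprod := mul_eq_rowSum_mul_colSum_of_weightedMutualInfo_eq_zero hP hindep
  constructor
  · by_contra hx
    have hcol₀ : P x x₀ = 0 := eq_zero_of_sum_eq_of_ne (fun x ↦ hP x x₀) (hcol x₀ h₀) hx
    have hrow_zero : ∑ y, P x y = 0 := by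
      have := hprod x x₀
      rw [hcol₀, mul_zero, hcol x₀ h₀] at this
      exact (mul_eq_zero.1 this.symm).resolve_right h₀
    exact hxy (eq_zero_of_rowSum_mul_colSum_eq_zero hP (by rw [hrow_zero, zero_mul]))
  · by_contra hy
    have hrow₀ : P x₀ y = 0 := eq_zero_of_sum_eq_of_ne (hP x₀) (hrow x₀ h₀) hy
    have hcol_zero : ∑ x, P x y = 0 := by
      have := hprod x₀ y
      rw [hrow₀, mul_zero, hrow x₀ h₀] at this
      exact (mul_eq_zero.1 this.symm).resolve_left h₀
    exact hxy (eq_zero_of_rowSum_mul_colSum_eq_zero hP (by rw [hcol_zero, mul_zero]))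

lemma sum_negMulLog_rowSum_add_sum_negMulLog_colSum_le_of_support_subset {β : Type*}
    [Fintype β] {Q : α → β → ℝ} (hQ : ∀ x y, 0 ≤ Q x y) {S : Finset α} {T : Finset β}
    (hS : ∀ x, ∑ y, Q x y ≠ 0 → x ∈ S) (hT : ∀ y, ∑ x, Q x y ≠ 0 → y ∈ T) :
    ∑ x, negMulLog (∑ y, Q x y) + ∑ y, negMulLog (∑ x, Q x y)
        - 2 * negMulLog (∑ x, ∑ y, Q x y)
      ≤ (∑ x, ∑ y, Q x y) * (log #S + log #T) := by
  have hrow := sum_negMulLog_le_of_support_subset (fun x ↦ sum_nonneg fun y _ ↦ hQ x y) hS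
  have hcol := sum_negMulLog_le_of_support_subset (fun y ↦ sum_nonneg fun x _ ↦ hQ x y) hT
  rw [sum_comm] at hcol
  linarith

lemma sum_negMulLog_rowSum_add_sum_negMulLog_colSum_le_of_diag_eq_zero
    (hP : ∀ x y, 0 ≤ P x y) (hindep : weightedMutualInfo P = 0) (hdiag : ∀ x, P x x = 0) :
    ∑ x, negMulLog (∑ y, P x y) + ∑ y, negMulLog (∑ x, P x y)
        - 2 * negMulLog (∑ x, ∑ y, P x y)
      ≤ (∑ x, ∑ y, P x y) * (2 * log (Fintype.card α / 2)) := by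
  set c := ∑ x, ∑ y, P x y
  rcases (sum_nonneg fun x _ ↦ sum_nonneg fun y _ ↦ hP x y : 0 ≤ c).eq_or_lt with hc | hc
  · simp [c, eq_zero_of_sum_sum_eq_zero hP hc.symm]
  set S := univ.filter fun x ↦ ∑ y, P x y ≠ 0
  set T := univ.filter fun y ↦ ∑ x, P x y ≠ 0
  have hdisj : Disjoint S T := disjoint_filter.2 fun x _ hS hT ↦ by
    have := mul_eq_rowSum_mul_colSum_of_weightedMutualInfo_eq_zero hP hindep x x
    rw [hdiag x, mul_zero] at this
    exact mul_ne_zero hS hT this.symm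
  have hcard : #S + #T ≤ Fintype.card α := by
    classical
    exact card_union_of_disjoint hdisj ▸ card_le_univ _
  obtain ⟨x, -, hx⟩ := exists_ne_zero_of_sum_ne_zero hc.ne'
  obtain ⟨y, -, hy⟩ := exists_ne_zero_of_sum_ne_zero (sum_comm (f := P) ▸ hc.ne')
  have hlog := log_add_log_le_two_mul_log_half_s16 (s := #S) (t := #T) (n := Fintype.card α)
    (Nat.cast_pos.2 (card_pos.2 ⟨x, by simpa [S] using hx⟩))
    (Nat.cast_pos.2 (card_pos.2 ⟨y, by simpa [T] using hy⟩)) (by exact_mod_cast hcard)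
  calc _ ≤ c * (log #S + log #T) :=
        sum_negMulLog_rowSum_add_sum_negMulLog_colSum_le_of_support_subset hP
          (by simp [S]) (by simp [T])
    _ ≤ c * (2 * log (Fintype.card α / 2)) := by gcongr

theorem sum_negMulLog_rowSum_add_sum_negMulLog_colSum_le (hP : ∀ x y, 0 ≤ P x y)
    (hindep : weightedMutualInfo P = 0) (hrow : ∀ x, P x x ≠ 0 → ∑ y, P x y = P x x)
    (hcol : ∀ y, P y y ≠ 0 → ∑ x, P x y = P y y) :
    ∑ x, negMulLog (∑ y, P x y) + ∑ y, negMulLog (∑ x, P x y)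
        - 2 * negMulLog (∑ x, ∑ y, P x y)
      ≤ (∑ x, ∑ y, P x y - ∑ x, P x x) * (2 * log (Fintype.card α / 2)) := by
  by_cases hdiag : ∃ x₀, P x₀ x₀ ≠ 0
  · obtain ⟨x₀, h₀⟩ := hdiag
    have hconc {x y : α} (hxy : P x y ≠ 0) : x = x₀ ∧ y = x₀ :=
      eq_and_eq_of_ne_zero_of_diag_ne_zero hP hindep hrow hcol h₀ hxy
    have htrace : ∑ x, P x x = ∑ x, ∑ y, P x y := sum_congr rfl fun x _ ↦ (sum_eq_single x
      (fun y _ hyx ↦ by_contra fun h ↦ hyx ((hconc h).2.trans (hconc h).1.symm)) (by simp)).symm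
    have hsupp := sum_negMulLog_rowSum_add_sum_negMulLog_colSum_le_of_support_subset hP
      (S := {x₀}) (T := {x₀})
      (fun x hx ↦ by
        obtain ⟨y, -, hy⟩ := exists_ne_zero_of_sum_ne_zero hx
        simp [(hconc hy).1])
      (fun y hy ↦ by
        obtain ⟨x, -, hx⟩ := exists_ne_zero_of_sum_ne_zero hy
        simp [(hconc hx).2])
    simpa [htrace] using hsupp
  simp only [not_exists, not_not] at hdiag
  simpa [hdiag] using
    sum_negMulLog_rowSum_add_sum_negMulLog_colSum_le_of_diag_eq_zero hP hindep hdiag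

theorem sum_sum_negMulLog_rowSum_add_sum_negMulLog_colSum_le {T : Type*} [Fintype T]
    {P : T → α → α → ℝ} (hP : ∀ m x y, 0 ≤ P m x y)
    (hindep : ∀ m, weightedMutualInfo (P m) = 0)
    (hrow : ∀ m x, P m x x ≠ 0 → ∑ y, P m x y = P m x x)
    (hcol : ∀ m y, P m y y ≠ 0 → ∑ x, P m x y = P m y y) :
    ∑ m, (∑ x, negMulLog (∑ y, P m x y) + ∑ y, negMulLog (∑ x, P m x y)
        - 2 * negMulLog (∑ x, ∑ y, P m x y))
      ≤ (∑ m, ∑ x, ∑ y, P m x y - ∑ m, ∑ x, P m x x)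
          * (2 * log (Fintype.card α / 2)) := by
  rw [← sum_sub_distrib, sum_mul]
  exact sum_le_sum fun m _ ↦ sum_negMulLog_rowSum_add_sum_negMulLog_colSum_le (hP m) (hindep m)
    (hrow m) (hcol m)

end Rectangle

section Distribution

variable {Ω : Type*} [MeasurableSpace Ω] (μ : Measure Ω)

lemma pm_congr {S S' : Type*} {V : Ω → S} {V' : Ω → S'} {s : S} {s' : S'}
    (h : ∀ ω, V' ω = s' ↔ V ω = s) : pm μ V' s' = pm μ V s := by
  simp only [pm]
  congr 2
  ext ω
  exact h ω

lemma pm_eq_sum_pm_prod [IsFiniteMeasure μ] {R S : Type*} [Fintype R] [MeasurableSpace R]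
    [MeasurableSingletonClass R] [MeasurableSpace S] [MeasurableSingletonClass S]
    {V : Ω → R} {W : Ω → S} (hV : Measurable V) (hW : Measurable W) (s : S) :
    pm μ W s = ∑ r, pm μ (fun ω ↦ (V ω, W ω)) (r, s) := by
  have h := sum_measureReal_preimage_singleton (μ := μ) (univ ×ˢ {s})
    fun p _ ↦ (hV.prodMk hW) (measurableSet_singleton p)
  rw [sum_product, sum_congr rfl fun r _ ↦ sum_singleton _ _] at h
  simp only [pm, ← measureReal_def, h]
  congr 1
  ext ω
  simp [eq_comm]

lemma pm_prod_eq_mul_of_indepFun {A B : Type*} [MeasurableSpace A] [MeasurableSingletonClass A]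
    [MeasurableSpace B] [MeasurableSingletonClass B] {X : Ω → A} {Y : Ω → B}
    (h : IndepFun X Y μ) (x : A) (y : B) :
    pm μ (fun ω ↦ (X ω, Y ω)) (x, y) = pm μ X x * pm μ Y y := by
  have hpre : (fun ω ↦ (X ω, Y ω)) ⁻¹' {(x, y)} = X ⁻¹' {x} ∩ Y ⁻¹' {y} := by
    ext
    simp
  rw [pm, hpre, h.measure_inter_preimage_eq_mul _ _ (measurableSet_singleton x)
    (measurableSet_singleton y), ENNReal.toReal_mul, pm, pm]

lemma sum_pm_eq_one [IsProbabilityMeasure μ] {S : Type*} [Fintype S] [MeasurableSpace S]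
    [MeasurableSingletonClass S] {V : Ω → S} (hV : Measurable V) : ∑ s, pm μ V s = 1 := by
  simp only [pm, ← measureReal_def]
  rw [sum_measureReal_preimage_singleton _ fun s _ ↦ hV (measurableSet_singleton s)]
  simp

lemma entH_eq_log_card_of_pm_eq {S : Type*} [Fintype S] {V : Ω → S}
    (h : ∀ s, pm μ V s = (Fintype.card S : ℝ)⁻¹) : entH μ V = log (Fintype.card S) := by
  simp only [entH, h, sum_const, card_univ, nsmul_eq_mul, negMulLog, log_inv]
  by_cases hS : (Fintype.card S : ℝ) = 0
  · simp [hS]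
  · field_simp

lemma entH_congr_equiv {S S' : Type*} [Fintype S] [Fintype S'] (e : S ≃ S') {V : Ω → S}
    {V' : Ω → S'} (h : ∀ ω, V' ω = e (V ω)) : entH μ V' = entH μ V := by
  simp only [entH]
  rw [← e.sum_comp]
  exact sum_congr rfl fun s _ ↦ congrArg negMulLog (pm_congr μ fun ω ↦ by
    rw [h, e.apply_eq_iff_eq])

lemma entH_prod_comm {R S : Type*} [Fintype R] [Fintype S] (V : Ω → R) (W : Ω → S) :
    entH μ (fun ω ↦ (V ω, W ω)) = entH μ (fun ω ↦ (W ω, V ω)) :=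
  entH_congr_equiv μ (Equiv.prodComm S R) fun _ ↦ rfl

variable {T A B : Type*}

noncomputable def jointPmf (M : Ω → T) (X : Ω → A) (Y : Ω → B) (m : T) (x : A) (y : B) :
    ℝ :=
  pm μ (fun ω ↦ (M ω, X ω, Y ω)) (m, x, y)

variable {M : Ω → T} {X : Ω → A} {Y : Ω → B}

lemma jointPmf_nonneg (m : T) (x : A) (y : B) : 0 ≤ jointPmf μ M X Y m x y :=
  ENNReal.toReal_nonneg

lemma jointPmf_swap (m : T) (x : A) (y : B) : jointPmf μ M Y X m y x = jointPmf μ M X Y m x y :=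
  pm_congr μ fun ω ↦ by simp only [Prod.mk.injEq]; tauto

lemma entH_triple_eq_sum_jointPmf [Fintype T] [Fintype A] [Fintype B] :
    entH μ (fun ω ↦ (M ω, X ω, Y ω)) =
      ∑ m, ∑ x, ∑ y, negMulLog (jointPmf μ M X Y m x y) := by
  simp only [entH, Fintype.sum_prod_type, jointPmf]

variable [MeasurableSpace T] [MeasurableSingletonClass T]
  [MeasurableSpace A] [MeasurableSingletonClass A] [MeasurableSpace B] [MeasurableSingletonClass B]

lemma pm_pair_eq_sum_jointPmf [IsFiniteMeasure μ] [Fintype B] (hM : Measurable M)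
    (hX : Measurable X) (hY : Measurable Y) (m : T) (x : A) :
    pm μ (fun ω ↦ (M ω, X ω)) (m, x) = ∑ y, jointPmf μ M X Y m x y := by
  rw [pm_eq_sum_pm_prod μ hY (hM.prodMk hX)]
  exact sum_congr rfl fun y _ ↦ pm_congr μ fun ω ↦ by simp only [Prod.mk.injEq]; tauto

lemma sum_jointPmf_eq_pm_pair [IsFiniteMeasure μ] [Fintype T] (hM : Measurable M)
    (hX : Measurable X) (hY : Measurable Y)
    (x : A) (y : B) : ∑ m, jointPmf μ M X Y m x y = pm μ (fun ω ↦ (X ω, Y ω)) (x, y) :=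
  (pm_eq_sum_pm_prod μ hM (hX.prodMk hY) (x, y)).symm

variable [Fintype T] [Fintype A] [Fintype B]

lemma sum_jointPmf_eq_one [IsProbabilityMeasure μ] (hM : Measurable M) (hX : Measurable X)
    (hY : Measurable Y) : ∑ m, ∑ x, ∑ y, jointPmf μ M X Y m x y = 1 := by
  simp only [jointPmf, ← Fintype.sum_prod_type']
  exact sum_pm_eq_one μ (hM.prodMk (hX.prodMk hY))

variable [IsFiniteMeasure μ]

lemma entH_pair_eq_sum_jointPmf (hM : Measurable M) (hX : Measurable X) (hY : Measurable Y) :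
    entH μ (fun ω ↦ (M ω, X ω)) =
      ∑ m, ∑ x, negMulLog (∑ y, jointPmf μ M X Y m x y) := by
  simp only [entH, Fintype.sum_prod_type, pm_pair_eq_sum_jointPmf μ hM hX hY]

lemma entH_eq_sum_jointPmf (hM : Measurable M) (hX : Measurable X) (hY : Measurable Y) :
    entH μ M = ∑ m, negMulLog (∑ x, ∑ y, jointPmf μ M X Y m x y) := by
  refine sum_congr rfl fun m _ ↦ congrArg negMulLog ?_
  rw [pm_eq_sum_pm_prod μ (hX.prodMk hY) hM, Fintype.sum_prod_type]
  exact sum_congr rfl fun x _ ↦ sum_congr rfl fun y _ ↦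
    pm_congr μ fun ω ↦ by simp only [Prod.mk.injEq]; tauto

theorem condMutInf_eq_sum_weightedMutualInfo (hM : Measurable M) (hX : Measurable X)
    (hY : Measurable Y) :
    condMutInf μ X Y M = ∑ m, weightedMutualInfo (jointPmf μ M X Y m) := by
  rw [condMutInf, entH_prod_comm μ X, entH_prod_comm μ Y,
    entH_prod_comm μ (fun ω ↦ (X ω, Y ω)),
    entH_pair_eq_sum_jointPmf μ hM hX hY, entH_pair_eq_sum_jointPmf μ hM hY hX,
    entH_triple_eq_sum_jointPmf, entH_eq_sum_jointPmf μ hM hX hY]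
  simp only [weightedMutualInfo, jointPmf_swap μ (X := X) (Y := Y), sum_add_distrib,
    sum_sub_distrib]

theorem weightedMutualInfo_jointPmf_eq_zero_of_condMutInf_eq_zero (hM : Measurable M)
    (hX : Measurable X) (hY : Measurable Y) (h : condMutInf μ X Y M = 0) (m : T) :
    weightedMutualInfo (jointPmf μ M X Y m) = 0 := by
  rw [condMutInf_eq_sum_weightedMutualInfo μ hM hX hY, sum_eq_zero_iff_of_nonneg fun m _ ↦
    weightedMutualInfo_nonneg fun x y ↦ jointPmf_nonneg μ m x y] at h
  exact h m (mem_univ m)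

theorem condMutInf_eq_sub_add_sum_jointPmf (hM : Measurable M) (hX : Measurable X)
    (hY : Measurable Y) :
    condMutInf μ X M Y = entH μ (fun ω ↦ (X ω, Y ω)) - entH μ Y
      + ∑ m, ∑ y, negMulLog (∑ x, jointPmf μ M X Y m x y)
      - ∑ m, ∑ x, ∑ y, negMulLog (jointPmf μ M X Y m x y) := by
  have hassoc :
      entH μ (fun ω ↦ ((X ω, M ω), Y ω)) = entH μ (fun ω ↦ (M ω, X ω, Y ω)) :=
    entH_congr_equiv μ ((Equiv.prodAssoc T A B).symm.trans
      ((Equiv.prodComm T A).prodCongr (Equiv.refl B))) fun _ ↦ rfl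
  rw [condMutInf, hassoc, entH_pair_eq_sum_jointPmf μ hM hY hX, entH_triple_eq_sum_jointPmf]
  simp only [jointPmf_swap μ (X := X) (Y := Y)]
  ring

theorem condMutInf_add_condMutInf_eq (hM : Measurable M) (hX : Measurable X)
    (hY : Measurable Y) (hXY : condMutInf μ X Y M = 0) :
    condMutInf μ X M Y + condMutInf μ Y M X =
      entH μ (fun ω ↦ (X ω, Y ω)) - entH μ Y + entH μ (fun ω ↦ (Y ω, X ω)) - entH μ X
        - ∑ m, (∑ x, negMulLog (∑ y, jointPmf μ M X Y m x y)
          + ∑ y, negMulLog (∑ x, jointPmf μ M X Y m x y)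
          - 2 * negMulLog (∑ x, ∑ y, jointPmf μ M X Y m x y)) := by
  have hcomm : ∑ m, ∑ y, ∑ x, negMulLog (jointPmf μ M X Y m x y) =
      ∑ m, ∑ x, ∑ y, negMulLog (jointPmf μ M X Y m x y) := sum_congr rfl fun m _ ↦ sum_comm
  rw [condMutInf_eq_sum_weightedMutualInfo μ hM hX hY] at hXY
  rw [condMutInf_eq_sub_add_sum_jointPmf μ hM hX hY,
    condMutInf_eq_sub_add_sum_jointPmf μ hM hY hX]
  simp only [weightedMutualInfo, jointPmf_swap μ (X := X) (Y := Y), sum_add_distrib,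
    sum_sub_distrib, ← mul_sum] at hXY ⊢
  linarith

end Distribution

section EqualityFunction

variable {Ω : Type*} [MeasurableSpace Ω] (μ : Measure Ω) [IsFiniteMeasure μ] {T A : Type*}
  [Fintype T] [Fintype A] [MeasurableSpace T] [MeasurableSingletonClass T] [MeasurableSpace A]
  [MeasurableSingletonClass A] [DecidableEq A] {M : Ω → T} {X Y : Ω → A}

theorem condEnt_eq_sum_jointPmf (hM : Measurable M) (hX : Measurable X) (hY : Measurable Y) :
    condEnt μ (fun ω ↦ if X ω = Y ω then (1 : Fin 2) else 0) (fun ω ↦ (M ω, X ω)) =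
      ∑ m, ∑ x, (negMulLog (∑ y, jointPmf μ M X Y m x y - jointPmf μ M X Y m x x)
        + negMulLog (jointPmf μ M X Y m x x) - negMulLog (∑ y, jointPmf μ M X Y m x y)) := by
  set Z : Ω → Fin 2 := fun ω ↦ if X ω = Y ω then 1 else 0
  have hZ : Measurable Z := (measurable_of_finite fun p : A × A ↦
    if p.1 = p.2 then (1 : Fin 2) else 0).comp (hX.prodMk hY)
  have hone : ∀ m x, pm μ (fun ω ↦ (Z ω, M ω, X ω)) (1, m, x) = jointPmf μ M X Y m x x :=
    fun m x ↦ pm_congr μ fun ω ↦ by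
      by_cases h : X ω = Y ω
      · simp only [Z, h, if_true, Prod.mk.injEq, true_and]
        tauto
      · simp only [Z, h, if_false, Prod.mk.injEq, zero_ne_one, false_and, false_iff, not_and]
        exact fun _ hx hy ↦ h (hx.trans hy.symm)
  have hzero : ∀ m x, pm μ (fun ω ↦ (Z ω, M ω, X ω)) (0, m, x) =
      ∑ y, jointPmf μ M X Y m x y - jointPmf μ M X Y m x x := fun m x ↦ by
    rw [← pm_pair_eq_sum_jointPmf μ hM hX hY, pm_eq_sum_pm_prod μ hZ (hM.prodMk hX),
      Fin.sum_univ_two, hone, add_sub_cancel_right]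
  simp only [condEnt, entH, Fintype.sum_prod_type, Fin.sum_univ_two, hzero, hone,
    pm_pair_eq_sum_jointPmf μ hM hX hY, ← sum_add_distrib, ← sum_sub_distrib]

theorem rowSum_eq_diag_of_condEnt_eq_zero (hM : Measurable M) (hX : Measurable X)
    (hY : Measurable Y)
    (h : condEnt μ (fun ω ↦ if X ω = Y ω then (1 : Fin 2) else 0)
      (fun ω ↦ (M ω, X ω)) = 0)
    (m : T) (x : A) (hd : jointPmf μ M X Y m x x ≠ 0) :
    ∑ y, jointPmf μ M X Y m x y = jointPmf μ M X Y m x x := by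
  set P := jointPmf μ M X Y
  have hP : ∀ m x y, 0 ≤ P m x y := jointPmf_nonneg μ
  have hle : ∀ m x, P m x x ≤ ∑ y, P m x y := fun m x ↦
    single_le_sum (fun y _ ↦ hP m x y) (mem_univ x)
  have hterm : ∀ m x, 0 ≤ negMulLog (∑ y, P m x y - P m x x) + negMulLog (P m x x)
      - negMulLog (∑ y, P m x y) := fun m x ↦ by
    have := negMulLog_add_le_add (sub_nonneg.2 (hle m x)) (hP m x x)
    rw [sub_add_cancel] at this
    linarith
  rw [condEnt_eq_sum_jointPmf μ hM hX hY,
    sum_eq_zero_iff_of_nonneg fun m _ ↦ sum_nonneg fun x _ ↦ hterm m x] at h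
  have hmx := (sum_eq_zero_iff_of_nonneg fun x _ ↦ hterm m x).1 (h m (mem_univ m)) x (mem_univ x)
  by_contra hne
  have hlt := negMulLog_add_lt_add (sub_pos.2 ((hle m x).lt_of_ne' hne))
    ((hP m x x).lt_of_ne' hd)
  rw [sub_add_cancel] at hlt
  linarith

theorem colSum_eq_diag_of_condEnt_eq_zero (hM : Measurable M) (hX : Measurable X)
    (hY : Measurable Y)
    (h : condEnt μ (fun ω ↦ if X ω = Y ω then (1 : Fin 2) else 0)
      (fun ω ↦ (M ω, Y ω)) = 0)
    (m : T) (y : A) (hd : jointPmf μ M X Y m y y ≠ 0) :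
    ∑ x, jointPmf μ M X Y m x y = jointPmf μ M X Y m y y := by
  simp_rw [eq_comm (a := X _)] at h
  simpa only [jointPmf_swap μ (X := X) (Y := Y)] using
    rowSum_eq_diag_of_condEnt_eq_zero μ hM hY hX h m y (by rwa [jointPmf_swap])

end EqualityFunction

theorem even_k_EQ_information_cost_lower_bound_general
    {Ω : Type*} [MeasurableSpace Ω] (μ : Measure Ω) [IsProbabilityMeasure μ]
    (k : ℕ) (hk2 : 2 ≤ k)
    {A : Type*} [Fintype A] [DecidableEq A]
    [MeasurableSpace A] [MeasurableSingletonClass A] (hA : Fintype.card A = k)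
    (X Y : Ω → A) (hX : Measurable X) (hY : Measurable Y)
    (hindep : IndepFun X Y μ)
    (hXunif : ∀ a : A, μ (X ⁻¹' {a}) = (k : ℝ≥0∞)⁻¹)
    (hYunif : ∀ a : A, μ (Y ⁻¹' {a}) = (k : ℝ≥0∞)⁻¹)
    (Z : Ω → Fin 2) (hZ : Z = fun ω => if X ω = Y ω then 1 else 0)
    {T : Type*} [Fintype T] [MeasurableSpace T] [MeasurableSingletonClass T]
    (M : Ω → T) (hM : Measurable M)
    (hXY : condMutInf μ X Y M = 0)
    (hZX : condEnt μ Z (fun ω => (M ω, X ω)) = 0)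
    (hZY : condEnt μ Z (fun ω => (M ω, Y ω)) = 0) :
    condMutInf μ X M Y + condMutInf μ Y M X
      ≥ 2 * Real.log 2 + (2 / (k : ℝ)) * Real.log ((k : ℝ) / 2) := by
  subst hZ
  have hk : (0 : ℝ) < k := by exact_mod_cast (by omega : 0 < k)
  have hpmX : ∀ x, pm μ X x = (Fintype.card A : ℝ)⁻¹ := fun x ↦ by simp [pm, hXunif, hA]
  have hpmY : ∀ y, pm μ Y y = (Fintype.card A : ℝ)⁻¹ := fun y ↦ by simp [pm, hYunif, hA]
  have hpmXY :
      ∀ p : A × A, pm μ (fun ω ↦ (X ω, Y ω)) p = (Fintype.card (A × A) : ℝ)⁻¹ :=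
    fun ⟨x, y⟩ ↦ by simp [pm_prod_eq_mul_of_indepFun μ hindep, hpmX, hpmY]
  have htrace : ∑ m, ∑ x, jointPmf μ M X Y m x x = (k : ℝ)⁻¹ := by
    rw [sum_comm]
    simp [sum_jointPmf_eq_pm_pair μ hM hX hY, hpmXY, hA, hk.ne']
  have hbound := sum_sum_negMulLog_rowSum_add_sum_negMulLog_colSum_le (jointPmf_nonneg μ)
    (weightedMutualInfo_jointPmf_eq_zero_of_condMutInf_eq_zero μ hM hX hY hXY)
    (rowSum_eq_diag_of_condEnt_eq_zero μ hM hX hY hZX)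
    (colSum_eq_diag_of_condEnt_eq_zero μ hM hX hY hZY)
  rw [sum_jointPmf_eq_one μ hM hX hY, htrace, hA, log_div hk.ne' two_ne_zero] at hbound
  rw [condMutInf_add_condMutInf_eq μ hM hX hY hXY, entH_prod_comm μ Y X,
    entH_eq_log_card_of_pm_eq μ hpmXY, entH_eq_log_card_of_pm_eq μ hpmX,
    entH_eq_log_card_of_pm_eq μ hpmY, Fintype.card_prod, hA, Nat.cast_mul,
    log_mul hk.ne' hk.ne', log_div hk.ne' two_ne_zero]
  have hexpand : (1 - (k : ℝ)⁻¹) * (2 * (log k - log 2)) =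
      2 * (log k - log 2) - 2 / k * (log k - log 2) := by ring
  linarith

/-- `k`-ary EQ lower bound, `k` even: for any finite-valued `M` with `I(X ; Y | M) = 0`,
`H(Z | (M,X)) = 0` and `H(Z | (M,Y)) = 0`,
`I(X ; M | Y) + I(Y ; M | X) ≥ 2 log 2 + (2/k) log (k/2)`. -/
theorem even_k_EQ_information_cost_lower_bound
    {Ω : Type*} [MeasurableSpace Ω] (μ : Measure Ω) [IsProbabilityMeasure μ]
    (k : ℕ) (hk : Even k) (hk2 : 2 ≤ k)
    {A : Type*} [Fintype A] [DecidableEq A]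
    [MeasurableSpace A] [MeasurableSingletonClass A] (hA : Fintype.card A = k)
    (X Y : Ω → A) (hX : Measurable X) (hY : Measurable Y)
    (hindep : IndepFun X Y μ)
    (hXunif : ∀ a : A, μ (X ⁻¹' {a}) = (k : ℝ≥0∞)⁻¹)
    (hYunif : ∀ a : A, μ (Y ⁻¹' {a}) = (k : ℝ≥0∞)⁻¹)
    (Z : Ω → Fin 2) (hZ : Z = fun ω => if X ω = Y ω then 1 else 0)
    {T : Type*} [Fintype T] [MeasurableSpace T] [MeasurableSingletonClass T]
    (M : Ω → T) (hM : Measurable M)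
    (hXY : condMutInf μ X Y M = 0)
    (hZX : condEnt μ Z (fun ω => (M ω, X ω)) = 0)
    (hZY : condEnt μ Z (fun ω => (M ω, Y ω)) = 0) :
    condMutInf μ X M Y + condMutInf μ Y M X
      ≥ 2 * Real.log 2 + (2 / (k : ℝ)) * Real.log ((k : ℝ) / 2) :=
  even_k_EQ_information_cost_lower_bound_general μ k hk2 hA X Y hX hY hindep hXunif hYunif Z hZ M hM
    hXY hZX hZY
end
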